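/- arXiv:1507.05266 — 7 statements merged into one kernel-verified Lean document; each statement's English description precedes it below -/
import Mathlib

section
/- Let N, K, M, t, r be positive integers with J = t + r ≤ N, and let S ∈ ℂ^{N×N} be Hermitian positive definite. With E_t the first t columns of I_N, A = [E_t E_r] the first J columns of I_N, P_{C†} the orthogonal projection C†(CC†)⁻¹C for C = [I_M 0_{M×(K−M)}], Z ∈ ℂ^{N×K}, Z_{W1} = S^{-1/2}Z, A₁ = S^{-1/2}A, A₀ = S^{-1/2}E_t, define R̂₁ = K⁻¹(S + S^{1/2} P_{A₁}^⊥ Z_{W1} P_{C†} Z_{W1}† P_{A₁}^⊥ S^{1/2}) and R̂₀ = K⁻¹(S + S^{1/2} P_{A₀}^⊥ Z_{W1} P_{C†} Z_{W1}† P_{A₀}^⊥ S^{1/2}). Then R̂₁ and R̂₀ are Hermitian positive definite (hence invertible), and R̂₁⁻¹ A = K · S⁻¹ A and R̂₀⁻¹ E_t = K · S⁻¹ E_t. -/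
/-!
The correction term `S^{1/2} P^⊥ Z_W P_{C†} Z_Wᴴ P^⊥ S^{1/2}` equals `Y P_{C†} Yᴴ` with
`Y = S^{1/2} P^⊥ Z_W`, so it is positive semidefinite and `K R̂ ≥ S > 0`. For the identity,
`S^{1/2} S⁻¹ E = S^{-1/2} E` is annihilated by `P^⊥_{S^{-1/2} E}`, hence `K R̂ S⁻¹ E = E`.
-/

open Matrix
open scoped ComplexOrder

noncomputable section

/-- Orthogonal projector onto the column space of `F`: `P_F = F (Fᴴ F)⁻¹ Fᴴ`. -/
def proj {n m : Type*} [Fintype n] [Fintype m] [DecidableEq n] [DecidableEq m]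
    (F : Matrix n m ℂ) : Matrix n n ℂ :=
  F * (Fᴴ * F)⁻¹ * Fᴴ

/-- Complementary projector `P_F^⊥ = I - P_F`. -/
def projPerp {n m : Type*} [Fintype n] [Fintype m] [DecidableEq n] [DecidableEq m]
    (F : Matrix n m ℂ) : Matrix n n ℂ :=
  1 - proj F

namespace Matrix

lemma mulVec_injective_of_left_inverse {R m n : Type*} [Semiring R] [Fintype m] [Fintype n]
    [DecidableEq n] {A : Matrix m n R} {B : Matrix n m R} (h : B * A = 1) :
    Function.Injective A.mulVec := by
  intro v w hvw
  simpa [mulVec_mulVec, h] using congrArg (B *ᵥ ·) hvw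

lemma mulVec_injective_leadingColumns {N m : ℕ} (h : m ≤ N) :
    Function.Injective
      (of fun (i : Fin N) (j : Fin m) => if (i : ℕ) = (j : ℕ) then (1 : ℂ) else 0).mulVec := by
  have hsub : (of fun (i : Fin N) (j : Fin m) => if (i : ℕ) = (j : ℕ) then (1 : ℂ) else 0) =
      (1 : Matrix (Fin N) (Fin N) ℂ).submatrix id (Fin.castLE h) := by
    ext i j
    simp [one_apply, Fin.ext_iff]
  rw [hsub]
  refine mulVec_injective_of_left_inverse (B := (submatrix 1 id (Fin.castLE h))ᴴ) ?_
  rw [conjTranspose_submatrix, conjTranspose_one,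
    ← submatrix_mul _ _ _ _ _ Function.bijective_id, Matrix.mul_one,
    submatrix_one _ (Fin.castLE_injective h)]

section Sqrt

variable {n : Type*} [Fintype n] [DecidableEq n]

lemma cfc_sqrt_eq_eigenvectorUnitary {S : Matrix n n ℂ} (hS : S.IsHermitian) :
    cfc Real.sqrt S = (hS.eigenvectorUnitary : Matrix n n ℂ) *
      diagonal ((↑) ∘ Real.sqrt ∘ hS.eigenvalues) *
      (star hS.eigenvectorUnitary : Matrix n n ℂ) := by
  rw [hS.cfc_eq, IsHermitian.cfc, Unitary.conjStarAlgAut_apply]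
  rfl

lemma cfc_sqrt_mul_self {S : Matrix n n ℂ} (hS : S.PosDef) :
    cfc Real.sqrt S * cfc Real.sqrt S = S := by
  rw [← cfc_mul Real.sqrt Real.sqrt S]
  conv_rhs => rw [← cfc_id' ℝ S hS.1.isSelfAdjoint]
  refine cfc_congr fun x hx => Real.mul_self_sqrt ?_
  rw [hS.1.spectrum_real_eq_range_eigenvalues] at hx
  obtain ⟨i, rfl⟩ := hx
  exact (hS.eigenvalues_pos i).le

end Sqrt

end Matrix

section Projection

variable {n m : Type*} [Fintype n] [Fintype m] [DecidableEq n] [DecidableEq m]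

lemma isHermitian_projPerp (F : Matrix n m ℂ) : (projPerp F).IsHermitian := by
  have hproj : (proj F).IsHermitian := by
    rw [IsHermitian, proj, conjTranspose_mul, conjTranspose_mul, conjTranspose_conjTranspose,
      conjTranspose_nonsing_inv, (isHermitian_conjTranspose_mul_self F).eq, Matrix.mul_assoc]
  exact isHermitian_one.sub hproj

lemma projPerp_mul_self {F : Matrix n m ℂ} (hF : Function.Injective F.mulVec) :
    projPerp F * F = 0 := by
  have hunit : IsUnit (Fᴴ * F).det :=
    (isUnit_iff_isUnit_det _).mp (PosDef.conjTranspose_mul_self F hF).isUnit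
  rw [projPerp, proj, Matrix.sub_mul, Matrix.one_mul, Matrix.mul_assoc, Matrix.mul_assoc,
    nonsing_inv_mul _ hunit, Matrix.mul_one, sub_self]

end Projection

section Estimate

variable {n m k : Type*} [Fintype n] [Fintype m] [Fintype k] [DecidableEq n] [DecidableEq m]

/-- The estimate `R̂` of the paper, with `H = S^{1/2}`, `E` the signal matrix (`A` or `E_t`)
and `Q = P_{C†}`. -/
def covEstimate (K : ℕ) (S H : Matrix n n ℂ) (E : Matrix n m ℂ) (Z : Matrix n k ℂ)
    (Q : Matrix k k ℂ) : Matrix n n ℂ :=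
  (K : ℂ)⁻¹ • (S + H * projPerp (H⁻¹ * E) * (H⁻¹ * Z) * Q * (H⁻¹ * Z)ᴴ * projPerp (H⁻¹ * E) * H)

variable {K : ℕ} {S H : Matrix n n ℂ} {Q : Matrix k k ℂ}

lemma posDef_covEstimate (hK : 0 < K) (hS : S.PosDef) (hH : H.IsHermitian) (hQ : Q.PosSemidef)
    (E : Matrix n m ℂ) (Z : Matrix n k ℂ) : (covEstimate K S H E Z Q).PosDef := by
  have hcorr : (H * projPerp (H⁻¹ * E) * (H⁻¹ * Z) * Q * (H⁻¹ * Z)ᴴ * projPerp (H⁻¹ * E) *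
      H).PosSemidef := by
    simpa only [conjTranspose_mul, hH.eq, (isHermitian_projPerp _).eq, Matrix.mul_assoc] using
      hQ.mul_mul_conjTranspose_same (H * projPerp (H⁻¹ * E) * (H⁻¹ * Z))
  exact (hS.add_posSemidef hcorr).smul (inv_pos.mpr (Nat.cast_pos.mpr hK))

lemma covEstimate_mul_inv_mul (hS : S.PosDef) (hHH : H * H = S) {E : Matrix n m ℂ}
    (hE : Function.Injective E.mulVec) (Z : Matrix n k ℂ) :
    covEstimate K S H E Z Q * (S⁻¹ * E) = (K : ℂ)⁻¹ • E := by
  have hSdet : IsUnit S.det := (isUnit_iff_isUnit_det S).mp hS.isUnit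
  have hHdet : IsUnit H.det :=
    isUnit_of_mul_isUnit_left (by rwa [← det_mul, hHH] : IsUnit (H.det * H.det))
  have hwhite : H * (S⁻¹ * E) = H⁻¹ * E := by
    rw [← hHH, Matrix.mul_inv_rev, ← Matrix.mul_assoc, ← Matrix.mul_assoc,
      mul_nonsing_inv _ hHdet, Matrix.one_mul]
  have hperp : projPerp (H⁻¹ * E) * (H⁻¹ * E) = 0 := by
    refine projPerp_mul_self fun v w hvw => hE (mulVec_injective_of_isUnit (A := H⁻¹) ?_ ?_)
    · exact (isUnit_nonsing_inv_iff).mpr ((isUnit_iff_isUnit_det H).mpr hHdet)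
    · simpa only [mulVec_mulVec] using hvw
  rw [covEstimate, Matrix.smul_mul, Matrix.add_mul, ← Matrix.mul_assoc, mul_nonsing_inv _ hSdet,
    Matrix.one_mul, Matrix.mul_assoc _ H, hwhite, Matrix.mul_assoc _ (projPerp _), hperp,
    Matrix.mul_zero, add_zero]

lemma inv_covEstimate_mul (hK : 0 < K) (hS : S.PosDef) (hH : H.IsHermitian) (hHH : H * H = S)
    (hQ : Q.PosSemidef) {E : Matrix n m ℂ} (hE : Function.Injective E.mulVec) (Z : Matrix n k ℂ) :
    (covEstimate K S H E Z Q)⁻¹ * E = (K : ℂ) • (S⁻¹ * E) := by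
  have hRdet : IsUnit (covEstimate K S H E Z Q).det :=
    (isUnit_iff_isUnit_det _).mp (posDef_covEstimate hK hS hH hQ E Z).isUnit
  have hK' : (K : ℂ) ≠ 0 := Nat.cast_ne_zero.mpr hK.ne'
  calc (covEstimate K S H E Z Q)⁻¹ * E
      = (covEstimate K S H E Z Q)⁻¹ * (covEstimate K S H E Z Q * ((K : ℂ) • (S⁻¹ * E))) := by
        rw [Matrix.mul_smul, covEstimate_mul_inv_mul hS hHH hE, smul_smul, mul_inv_cancel₀ hK',
          one_smul]
    _ = (K : ℂ) • (S⁻¹ * E) := nonsing_inv_mul_cancel_left _ _ hRdet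

end Estimate

theorem ml_covariance_estimates_properties_general
    (N K M t r : ℕ) (hK : 0 < K)
    (hJ : t + r ≤ N)
    (S : Matrix (Fin N) (Fin N) ℂ) (hS : S.PosDef)
    (Z : Matrix (Fin N) (Fin K) ℂ) :
    -- `E_t` : first `t` columns of the identity `I_N`
    let Et : Matrix (Fin N) (Fin t) ℂ := Matrix.of fun i j => if (i : ℕ) = (j : ℕ) then 1 else 0
    -- `A = [E_t E_r]` : first `t + r` columns of the identity `I_N`
    let A : Matrix (Fin N) (Fin (t + r)) ℂ :=
      Matrix.of fun i j => if (i : ℕ) = (j : ℕ) then 1 else 0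
    -- `C = [I_M 0]`
    let C : Matrix (Fin M) (Fin K) ℂ := Matrix.of fun i j => if (i : ℕ) = (j : ℕ) then 1 else 0
    let PC : Matrix (Fin K) (Fin K) ℂ := Cᴴ * (C * Cᴴ)⁻¹ * C
    let Shalf : Matrix (Fin N) (Fin N) ℂ :=
      (hS.posSemidef.1.eigenvectorUnitary : Matrix (Fin N) (Fin N) ℂ) *
        diagonal ((↑) ∘ Real.sqrt ∘ hS.posSemidef.1.eigenvalues) *
        (star hS.posSemidef.1.eigenvectorUnitary : Matrix (Fin N) (Fin N) ℂ)
    let ZW1 : Matrix (Fin N) (Fin K) ℂ := Shalf⁻¹ * Z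
    let A1 : Matrix (Fin N) (Fin (t + r)) ℂ := Shalf⁻¹ * A
    let A0 : Matrix (Fin N) (Fin t) ℂ := Shalf⁻¹ * Et
    let R1 : Matrix (Fin N) (Fin N) ℂ :=
      ((K : ℂ))⁻¹ • (S + Shalf * projPerp A1 * ZW1 * PC * ZW1ᴴ * projPerp A1 * Shalf)
    let R0 : Matrix (Fin N) (Fin N) ℂ :=
      ((K : ℂ))⁻¹ • (S + Shalf * projPerp A0 * ZW1 * PC * ZW1ᴴ * projPerp A0 * Shalf)
    R1.PosDef ∧ R0.PosDef ∧
      R1⁻¹ * A = (K : ℂ) • (S⁻¹ * A) ∧ R0⁻¹ * Et = (K : ℂ) • (S⁻¹ * Et) := by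
  intro Et A C PC Shalf ZW1 A1 A0 R1 R0
  have hShalf : Shalf = cfc Real.sqrt S := (cfc_sqrt_eq_eigenvectorUnitary hS.1).symm
  have hH : Shalf.IsHermitian := hShalf ▸ cfc_predicate Real.sqrt S
  have hHH : Shalf * Shalf = S := hShalf ▸ cfc_sqrt_mul_self hS
  -- `(C Cᴴ)⁻¹` is positive semidefinite even where `⁻¹` takes its junk value `0`.
  have hPC : PC.PosSemidef :=
    (posSemidef_self_mul_conjTranspose C).inv.conjTranspose_mul_mul_same C
  have hA : Function.Injective A.mulVec := mulVec_injective_leadingColumns hJ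
  have hEt : Function.Injective Et.mulVec :=
    mulVec_injective_leadingColumns (le_of_add_le_left hJ)
  exact ⟨posDef_covEstimate hK hS hH hPC A Z, posDef_covEstimate hK hS hH hPC Et Z,
    inv_covEstimate_mul hK hS hH hHH hPC hA Z, inv_covEstimate_mul hK hS hH hHH hPC hEt Z⟩

/-- Lemma 1 of the paper: the ML covariance estimates `R̂₁`, `R̂₀` are Hermitian positive
definite and satisfy `R̂₁⁻¹ A = K S⁻¹ A` and `R̂₀⁻¹ E_t = K S⁻¹ E_t`. -/
theorem ml_covariance_estimates_properties
    (N K M t r : ℕ) (hN : 0 < N) (hK : 0 < K) (hM : 0 < M) (ht : 0 < t) (hr : 0 < r)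
    (hJ : t + r ≤ N) (hMK : M ≤ K)
    (S : Matrix (Fin N) (Fin N) ℂ) (hS : S.PosDef)
    (Z : Matrix (Fin N) (Fin K) ℂ) :
    -- `E_t` : first `t` columns of the identity `I_N`
    let Et : Matrix (Fin N) (Fin t) ℂ := Matrix.of fun i j => if (i : ℕ) = (j : ℕ) then 1 else 0
    -- `A = [E_t E_r]` : first `t + r` columns of the identity `I_N`
    let A : Matrix (Fin N) (Fin (t + r)) ℂ :=
      Matrix.of fun i j => if (i : ℕ) = (j : ℕ) then 1 else 0
    -- `C = [I_M 0]`
    let C : Matrix (Fin M) (Fin K) ℂ := Matrix.of fun i j => if (i : ℕ) = (j : ℕ) then 1 else 0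
    let PC : Matrix (Fin K) (Fin K) ℂ := Cᴴ * (C * Cᴴ)⁻¹ * C
    let Shalf : Matrix (Fin N) (Fin N) ℂ :=
      (hS.posSemidef.1.eigenvectorUnitary : Matrix (Fin N) (Fin N) ℂ) *
        diagonal ((↑) ∘ Real.sqrt ∘ hS.posSemidef.1.eigenvalues) *
        (star hS.posSemidef.1.eigenvectorUnitary : Matrix (Fin N) (Fin N) ℂ)
    let ZW1 : Matrix (Fin N) (Fin K) ℂ := Shalf⁻¹ * Z
    let A1 : Matrix (Fin N) (Fin (t + r)) ℂ := Shalf⁻¹ * A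
    let A0 : Matrix (Fin N) (Fin t) ℂ := Shalf⁻¹ * Et
    let R1 : Matrix (Fin N) (Fin N) ℂ :=
      ((K : ℂ))⁻¹ • (S + Shalf * projPerp A1 * ZW1 * PC * ZW1ᴴ * projPerp A1 * Shalf)
    let R0 : Matrix (Fin N) (Fin N) ℂ :=
      ((K : ℂ))⁻¹ • (S + Shalf * projPerp A0 * ZW1 * PC * ZW1ᴴ * projPerp A0 * Shalf)
    R1.PosDef ∧ R0.PosDef ∧
      R1⁻¹ * A = (K : ℂ) • (S⁻¹ * A) ∧ R0⁻¹ * Et = (K : ℂ) • (S⁻¹ * Et) :=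
  ml_covariance_estimates_properties_general N K M t r hK hJ S hS Z
end
end

section
/- Let W ∈ ℂ^{N×N} be Hermitian positive definite, E_r ∈ ℂ^{N×r} and A = [E_t E_r] ∈ ℂ^{N×(t+r)} with A of full column rank, and let Γ₂₂ ∈ ℂ^{r×r} be the lower-right r×r block of (A†WA)⁻¹. Let C ∈ ℂ^{M×K} have full row rank, set G = E_r† W E_r, P_{C†} = C†(CC†)⁻¹C, and for Y ∈ ℂ^{N×K} let B̂₀ = G⁻¹ E_r† W Y C† (CC†)⁻¹. Then vec(B̂₀)† [ (CC†)ᵀ ⊗ (G Γ₂₂ G) ] vec(B̂₀) = Tr[ Y† W E_r Γ₂₂ E_r† W Y P_{C†} ]; i.e., the closed-form Durbin statistic coincides with the closed-form Rao statistic (Theorem 1: statistical equivalence of the Durbin and Rao tests for the I-GMANOVA model). -/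
/-!
Write `X = C Cᴴ` and `V = E_rᴴ W Y`, so that `B̂₀ = G⁻¹ V Cᴴ X⁻¹`. The Kronecker quadratic form
on `vec B̂₀` is `Tr[X B̂₀ᴴ (G Γ₂₂ G) B̂₀]`. Since `G` and `X` are Hermitian, `X B̂₀ᴴ = C Vᴴ G⁻¹`,
so both factors `G` cancel, and cycling `C` to the end of the trace leaves `Tr[Vᴴ Γ₂₂ V P_{Cᴴ}]`.
The inverses are genuine: full column rank of `A` passes to `E_r`, which makes `G` positive
definite, and full row rank of `C` makes `X` invertible.
-/

open Matrix
open scoped ComplexOrder Kronecker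

noncomputable section

/-- Column-stacking vectorization: `vec B` stacks the columns of `B` one under another
(index pairs are (column, row)). -/
def vec {r M : Type*} (B : Matrix r M ℂ) : M × r → ℂ := fun p => B p.2 p.1

namespace Matrix

variable {K : Type*} [Field K]

theorem linearIndependent_col_of_rank_eq_card {m n : Type*} [Fintype m] [Fintype n]
    {A : Matrix m n K} (h : A.rank = Fintype.card n) : LinearIndependent K A.col :=
  linearIndependent_iff_card_eq_finrank_span.2 <| by
    rw [Set.finrank, ← rank_eq_finrank_span_cols, h]

theorem isUnit_of_rank_eq_card {n : Type*} [Fintype n] [DecidableEq n] {A : Matrix n n K}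
    (h : A.rank = Fintype.card n) : IsUnit A :=
  linearIndependent_cols_iff_isUnit.1 (linearIndependent_col_of_rank_eq_card h)

end Matrix

theorem star_vec_dotProduct_kronecker_mulVec_vec {m r : Type*} [Fintype m] [Fintype r]
    (X : Matrix m m ℂ) (K : Matrix r r ℂ) (B : Matrix r m ℂ) :
    star (_root_.vec B) ⬝ᵥ ((Xᵀ ⊗ₖ K) *ᵥ _root_.vec B) = (X * Bᴴ * K * B).trace := by
  change star (Matrix.vec B) ⬝ᵥ ((Xᵀ ⊗ₖ K) *ᵥ Matrix.vec B) = _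
  rw [kronecker_mulVec_vec, star_vec_dotProduct_vec, transpose_transpose, ← Matrix.mul_assoc,
    trace_mul_comm]
  simp only [Matrix.mul_assoc]

theorem trace_durbin_eq_trace_rao {α : Type*} [CommRing α] [StarRing α]
    {r m k : Type*} [Fintype r] [DecidableEq r] [Fintype m] [DecidableEq m] [Fintype k]
    {G : Matrix r r α} (hG : G.IsHermitian) (hGdet : IsUnit G.det)
    {C : Matrix m k α} (hCdet : IsUnit (C * Cᴴ).det) (V : Matrix r k α) (Γ : Matrix r r α) :
    let B := G⁻¹ * V * Cᴴ * (C * Cᴴ)⁻¹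
    (C * Cᴴ * Bᴴ * (G * Γ * G) * B).trace = (Vᴴ * Γ * V * (Cᴴ * (C * Cᴴ)⁻¹ * C)).trace := by
  intro B
  have hBH : Bᴴ = (C * Cᴴ)⁻¹ * C * Vᴴ * G⁻¹ := by
    simp only [B, conjTranspose_mul, conjTranspose_nonsing_inv, conjTranspose_conjTranspose,
      hG.eq, Matrix.mul_assoc]
  have hcancel : C * Cᴴ * Bᴴ * (G * Γ * G) * B = C * (Vᴴ * Γ * V * (Cᴴ * (C * Cᴴ)⁻¹)) := by
    rw [hBH]
    simp only [B, Matrix.mul_assoc, mul_nonsing_inv_cancel_left _ _ hCdet,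
      nonsing_inv_mul_cancel_left _ _ hGdet, mul_nonsing_inv_cancel_left _ _ hGdet]
  rw [hcancel, trace_mul_comm, Matrix.mul_assoc (Vᴴ * Γ * V)]

theorem durbin_equals_rao_general
    {n k : Type*} [Fintype n] [DecidableEq n] [Fintype k] [DecidableEq k]
    (t r M : ℕ)
    (W : Matrix n n ℂ) (hW : W.PosDef)
    (Et : Matrix n (Fin t) ℂ) (Er : Matrix n (Fin r) ℂ)
    (hA : (fromCols Et Er).rank = t + r)
    (C : Matrix (Fin M) k ℂ) (hC : C.rank = M)
    (Y : Matrix n k ℂ) :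
    let A : Matrix n (Fin t ⊕ Fin r) ℂ := fromCols Et Er
    let Γ22 : Matrix (Fin r) (Fin r) ℂ := ((Aᴴ * W * A)⁻¹).toBlocks₂₂
    let G : Matrix (Fin r) (Fin r) ℂ := Erᴴ * W * Er
    let PC : Matrix k k ℂ := Cᴴ * (C * Cᴴ)⁻¹ * C
    let B0 : Matrix (Fin r) (Fin M) ℂ := G⁻¹ * Erᴴ * W * Y * Cᴴ * (C * Cᴴ)⁻¹
    star (_root_.vec B0) ⬝ᵥ ((((C * Cᴴ)ᵀ) ⊗ₖ (G * Γ22 * G)) *ᵥ _root_.vec B0) =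
      (Yᴴ * W * Er * Γ22 * Erᴴ * W * Y * PC).trace := by
  intro A Γ22 G PC B0
  have hAcol : LinearIndependent ℂ A.col :=
    linearIndependent_col_of_rank_eq_card (by simpa using hA)
  have hEr : LinearIndependent ℂ Er.col := hAcol.comp Sum.inr Sum.inr_injective
  have hG : G.PosDef := hW.conjTranspose_mul_mul_same (mulVec_injective_iff.2 hEr)
  have hGdet : IsUnit G.det := (isUnit_iff_isUnit_det G).1 hG.isUnit
  have hCCdet : IsUnit (C * Cᴴ).det := (isUnit_iff_isUnit_det _).1 <|
    isUnit_of_rank_eq_card (by rw [rank_self_mul_conjTranspose, hC, Fintype.card_fin])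
  have hB0 : B0 = G⁻¹ * (Erᴴ * W * Y) * Cᴴ * (C * Cᴴ)⁻¹ := by
    simp only [B0, Matrix.mul_assoc]
  have hRao : Yᴴ * W * Er * Γ22 * Erᴴ * W * Y * PC =
      (Erᴴ * W * Y)ᴴ * Γ22 * (Erᴴ * W * Y) * PC := by
    simp only [conjTranspose_mul, conjTranspose_conjTranspose, hW.1.eq, Matrix.mul_assoc]
  rw [star_vec_dotProduct_kronecker_mulVec_vec, hB0, hRao]
  exact trace_durbin_eq_trace_rao hG.1 hGdet hCCdet _ _

/-- Theorem 1 of the paper (algebraic core): the closed-form Durbin statistic coincides with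
the closed-form Rao statistic,
`vec(B̂₀)ᴴ [(CCᴴ)ᵀ ⊗ (G Γ₂₂ G)] vec(B̂₀) = Tr[Yᴴ W E_r Γ₂₂ E_rᴴ W Y P_{Cᴴ}]`. -/
theorem durbin_equals_rao
    {n k : Type*} [Fintype n] [DecidableEq n] [Fintype k] [DecidableEq k]
    (t r M : ℕ) (ht : 0 < t) (hr : 0 < r) (hM : 0 < M)
    (W : Matrix n n ℂ) (hW : W.PosDef)
    (Et : Matrix n (Fin t) ℂ) (Er : Matrix n (Fin r) ℂ)
    (hA : (fromCols Et Er).rank = t + r)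
    (C : Matrix (Fin M) k ℂ) (hC : C.rank = M)
    (Y : Matrix n k ℂ) :
    let A : Matrix n (Fin t ⊕ Fin r) ℂ := fromCols Et Er
    let Γ22 : Matrix (Fin r) (Fin r) ℂ := ((Aᴴ * W * A)⁻¹).toBlocks₂₂
    let G : Matrix (Fin r) (Fin r) ℂ := Erᴴ * W * Er
    let PC : Matrix k k ℂ := Cᴴ * (C * Cᴴ)⁻¹ * C
    let B0 : Matrix (Fin r) (Fin M) ℂ := G⁻¹ * Erᴴ * W * Y * Cᴴ * (C * Cᴴ)⁻¹
    star (_root_.vec B0) ⬝ᵥ ((((C * Cᴴ)ᵀ) ⊗ₖ (G * Γ22 * G)) *ᵥ _root_.vec B0) =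
      (Yᴴ * W * Er * Γ22 * Erᴴ * W * Y * PC).trace :=
  durbin_equals_rao_general t r M W hW Et Er hA C hC Y
end
end

section
/- Let t, r, q, M be positive integers, N = t + r + q, and let S ∈ ℂ^{N×N} be Hermitian positive definite with 3×3 block partition S = (S_{ij})_{i,j=1,2,3} conformal to (t, r, q). Let X ∈ ℂ^{N×M} with row blocks X₁ ∈ ℂ^{t×M}, X₂ ∈ ℂ^{r×M}, X₃ ∈ ℂ^{q×M}. Let E_t be the first t columns of I_N and A₀ = S^{-1/2}E_t. Then (S^{-1/2}X)† P_{A₀}^⊥ (S^{-1/2}X) = X_{2.3}† S_{2.3}⁻¹ X_{2.3} + X₃† S₃₃⁻¹ X₃, where X_{2.3} = X₂ − S₂₃ S₃₃⁻¹ X₃ and S_{2.3} = S₂₂ − S₂₃ S₃₃⁻¹ S₃₂ (both S₃₃ and S_{2.3} being invertible). -/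
open Matrix
open scoped ComplexOrder

noncomputable section

/-!
Whitening turns the quadratic form into `Xᴴ (S⁻¹ - S⁻¹ E (Eᴴ S⁻¹ E)⁻¹ Eᴴ S⁻¹) X`. When `[E F]` is
unitary, the matrix in brackets is `F (Fᴴ S F)⁻¹ Fᴴ`: it annihilates `E` on both sides, and its
compression `Fᴴ (·) F` is a left inverse of `Fᴴ S F`. For `E = E_t`, `Fᴴ S F` is the lower-right
`2 × 2` block of `S`, and inverting it through the Schur complement `S_{2.3}` of `S₃₃` splits the
form into the two terms.
-/

open scoped MatrixOrder

namespace Matrix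

variable {R : Type*} [CommRing R] {l m n k p : Type*}

section SchurComplement

variable [Fintype m] [Fintype k] [DecidableEq m] [DecidableEq k]

theorem isUnit_schur_of_isUnit_fromBlocks {A : Matrix m m R} {B : Matrix m k R}
    {C : Matrix k m R} {D : Matrix k k R} (hD : IsUnit D) (h : IsUnit (fromBlocks A B C D)) :
    IsUnit (A - B * D⁻¹ * C) := by
  let := hD.invertible
  rw [← invOf_eq_nonsing_inv]
  exact isUnit_fromBlocks_iff_of_invertible₂₂.mp h

theorem fromCols_mul_inv_fromBlocks_mul_fromRows [Fintype l] {A : Matrix m m R}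
    {B : Matrix m k R} {C : Matrix k m R} {D : Matrix k k R} (hD : IsUnit D)
    (hA : IsUnit (A - B * D⁻¹ * C)) (W₁ : Matrix l m R) (W₂ : Matrix l k R)
    (Y₁ : Matrix m p R) (Y₂ : Matrix k p R) :
    fromCols W₁ W₂ * (fromBlocks A B C D)⁻¹ * fromRows Y₁ Y₂ =
      (W₁ - W₂ * D⁻¹ * C) * (A - B * D⁻¹ * C)⁻¹ * (Y₁ - B * D⁻¹ * Y₂) + W₂ * D⁻¹ * Y₂ := by
  let := hD.invertible
  rw [← invOf_eq_nonsing_inv D] at hA ⊢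
  let := hA.invertible
  let := fromBlocks₂₂Invertible A B C D
  rw [← invOf_eq_nonsing_inv (fromBlocks A B C D), ← invOf_eq_nonsing_inv, invOf_fromBlocks₂₂_eq,
    fromCols_mul_fromBlocks, fromCols_mul_fromRows]
  simp only [Matrix.mul_add, Matrix.add_mul, Matrix.mul_sub, Matrix.sub_mul, Matrix.mul_neg,
    Matrix.neg_mul, Matrix.mul_assoc]
  abel

end SchurComplement

theorem mul_one_submatrix [Fintype l] [Fintype n] [DecidableEq n] (f : m → n)
    (A : Matrix l n R) : A * (1 : Matrix n n R).submatrix id f = A.submatrix id f :=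
  mul_submatrix_one (Equiv.refl n) f A

variable [StarRing R]

theorem conjTranspose_one_submatrix_mul [Fintype n] [DecidableEq n] (f : m → n)
    (A : Matrix n p R) : ((1 : Matrix n n R).submatrix id f)ᴴ * A = A.submatrix f id := by
  rw [conjTranspose_submatrix, conjTranspose_one]
  exact one_submatrix_mul f (Equiv.refl n) A

theorem conjTranspose_one_submatrix_mul_self [Fintype n] [DecidableEq n] [DecidableEq m]
    {f : m → n} (hf : Function.Injective f) :
    ((1 : Matrix n n R).submatrix id f)ᴴ * (1 : Matrix n n R).submatrix id f = 1 := by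
  rw [conjTranspose_one_submatrix_mul, submatrix_submatrix, Function.comp_id, Function.id_comp,
    submatrix_one f hf]

theorem conjTranspose_one_submatrix_inl_mul_inr [Fintype n] [DecidableEq n] (σ : m ⊕ k ≃ n) :
    ((1 : Matrix n n R).submatrix id (σ ∘ Sum.inl))ᴴ *
      (1 : Matrix n n R).submatrix id (σ ∘ Sum.inr) = 0 := by
  rw [conjTranspose_one_submatrix_mul]
  ext i j
  simp

theorem one_submatrix_inl_mul_conjTranspose_add_inr [Fintype m] [Fintype k] [Fintype n]
    [DecidableEq n] (σ : m ⊕ k ≃ n) :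
    (1 : Matrix n n R).submatrix id (σ ∘ Sum.inl) *
        ((1 : Matrix n n R).submatrix id (σ ∘ Sum.inl))ᴴ +
      (1 : Matrix n n R).submatrix id (σ ∘ Sum.inr) *
        ((1 : Matrix n n R).submatrix id (σ ∘ Sum.inr))ᴴ = 1 := by
  have hcols : fromCols ((1 : Matrix n n R).submatrix id (σ ∘ Sum.inl))
      ((1 : Matrix n n R).submatrix id (σ ∘ Sum.inr)) = (1 : Matrix n n R).submatrix id σ := by
    ext i (j | j) <;> rfl
  rw [← fromCols_mul_fromRows, ← conjTranspose_fromCols_eq_fromRows_conjTranspose, hcols,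
    conjTranspose_submatrix, conjTranspose_one, one_submatrix_mul (e₁ := id) (e₂ := σ)]
  simp

theorem inv_sub_inv_compression_eq_compl [Fintype n] [Fintype m] [Fintype k] [DecidableEq n]
    [DecidableEq m] [DecidableEq k] {S : Matrix n n R} (hS : IsUnit S)
    {E : Matrix n m R} {F : Matrix n k R} (hEF : Eᴴ * F = 0) (hFF : Fᴴ * F = 1)
    (hcompl : E * Eᴴ + F * Fᴴ = 1) (hG : IsUnit (Eᴴ * S⁻¹ * E)) :
    S⁻¹ - S⁻¹ * E * (Eᴴ * S⁻¹ * E)⁻¹ * Eᴴ * S⁻¹ = F * (Fᴴ * S * F)⁻¹ * Fᴴ := by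
  set G := Eᴴ * S⁻¹ * E
  set K := S⁻¹ - S⁻¹ * E * G⁻¹ * Eᴴ * S⁻¹
  have hG' : IsUnit G.det := (isUnit_iff_isUnit_det G).mp hG
  have hKE : K * E = 0 := by
    rw [show K * E = S⁻¹ * E - S⁻¹ * E * (G⁻¹ * G) by
        simp only [K, G, Matrix.sub_mul, Matrix.mul_assoc],
      nonsing_inv_mul _ hG', Matrix.mul_one, sub_self]
  have hEK : Eᴴ * K = 0 := by
    rw [show Eᴴ * K = Eᴴ * S⁻¹ - G * G⁻¹ * Eᴴ * S⁻¹ by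
        simp only [K, G, Matrix.mul_sub, Matrix.mul_assoc],
      mul_nonsing_inv _ hG', Matrix.one_mul, sub_self]
  have hK : K = F * (Fᴴ * K * F) * Fᴴ := by
    calc K = (E * Eᴴ + F * Fᴴ) * K * (E * Eᴴ + F * Fᴴ) := by
          rw [hcompl, Matrix.one_mul, Matrix.mul_one]
      _ = F * (Fᴴ * K * F) * Fᴴ := by
          simp only [Matrix.add_mul, Matrix.mul_add, Matrix.mul_assoc, hEK, hKE,
            ← Matrix.mul_assoc K E, Matrix.mul_zero, Matrix.zero_mul, zero_add]
  have hKSF : Fᴴ * K * F * (Fᴴ * S * F) = 1 := by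
    have hSS : S⁻¹ * S = 1 := nonsing_inv_mul _ ((isUnit_iff_isUnit_det S).mp hS)
    calc Fᴴ * K * F * (Fᴴ * S * F) = Fᴴ * K * (E * Eᴴ + F * Fᴴ) * S * F := by
          simp only [Matrix.mul_add, Matrix.mul_assoc, ← Matrix.mul_assoc K E, hKE,
            Matrix.zero_mul, Matrix.mul_zero, zero_add]
      _ = 1 := by
          rw [hcompl]
          simp only [K, Matrix.mul_one, Matrix.mul_sub, Matrix.sub_mul, Matrix.mul_assoc, hSS, hEF,
            hFF, Matrix.mul_zero, sub_zero]
  rw [inv_eq_left_inv hKSF]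
  exact hK

namespace PosSemidef

variable {𝕜 : Type*} [RCLike 𝕜] [Fintype n] [DecidableEq n] {S : Matrix n n 𝕜}

theorem eigenvectorUnitary_mul_diagonal_sqrt_mul_star (hS : S.PosSemidef) :
    (hS.1.eigenvectorUnitary : Matrix n n 𝕜) *
        diagonal (RCLike.ofReal ∘ Real.sqrt ∘ hS.1.eigenvalues) *
        (star hS.1.eigenvectorUnitary : Matrix n n 𝕜) = CFC.sqrt S := by
  rw [CFC.sqrt_eq_real_sqrt S hS.nonneg, cfcₙ_eq_cfc, hS.1.cfc_eq, IsHermitian.cfc,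
    Unitary.conjStarAlgAut_apply]

theorem conjTranspose_inv_sqrt_mul_inv_sqrt (hS : S.PosSemidef) :
    (CFC.sqrt S)⁻¹ᴴ * (CFC.sqrt S)⁻¹ = S⁻¹ := by
  rw [conjTranspose_nonsing_inv, (CFC.sqrt_nonneg S).posSemidef.1.eq, ← Matrix.mul_inv_rev,
    CFC.sqrt_mul_sqrt_self S hS.nonneg]

end PosSemidef

theorem PosDef.isUnit_conjTranspose_one_submatrix_mul_mul {𝕜 : Type*} [RCLike 𝕜] [Fintype n]
    [Fintype m] [DecidableEq n] [DecidableEq m] {S : Matrix n n 𝕜} (hS : S.PosDef) {f : m → n}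
    (hf : Function.Injective f) :
    IsUnit (((1 : Matrix n n 𝕜).submatrix id f)ᴴ * S * (1 : Matrix n n 𝕜).submatrix id f) := by
  rw [conjTranspose_one_submatrix_mul, mul_one_submatrix]
  exact (hS.submatrix hf).isUnit

end Matrix

theorem conjTranspose_mul_projPerp_mul {l n m p : Type*} [Fintype l] [Fintype n] [Fintype m]
    [DecidableEq l] [DecidableEq m] (V : Matrix l n ℂ) (E : Matrix n m ℂ) (X : Matrix n p ℂ) :
    (V * X)ᴴ * projPerp (V * E) * (V * X) =
      Xᴴ * (Vᴴ * V - Vᴴ * V * E * (Eᴴ * (Vᴴ * V) * E)⁻¹ * Eᴴ * (Vᴴ * V)) * X := by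
  simp only [projPerp, proj, conjTranspose_mul, Matrix.mul_sub, Matrix.sub_mul, Matrix.mul_one,
    Matrix.mul_assoc]

theorem whitened_quadratic_form_H0_general
    (t r q M : ℕ)
    (S : Matrix ((Fin t ⊕ Fin r) ⊕ Fin q) ((Fin t ⊕ Fin r) ⊕ Fin q) ℂ) (hS : S.PosDef)
    (X : Matrix ((Fin t ⊕ Fin r) ⊕ Fin q) (Fin M) ℂ) :
    let S22 : Matrix (Fin r) (Fin r) ℂ := S.submatrix (Sum.inl ∘ Sum.inr) (Sum.inl ∘ Sum.inr)
    let S23 : Matrix (Fin r) (Fin q) ℂ := S.submatrix (Sum.inl ∘ Sum.inr) Sum.inr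
    let S32 : Matrix (Fin q) (Fin r) ℂ := S.submatrix Sum.inr (Sum.inl ∘ Sum.inr)
    let S33 : Matrix (Fin q) (Fin q) ℂ := S.submatrix Sum.inr Sum.inr
    let X2 : Matrix (Fin r) (Fin M) ℂ := X.submatrix (Sum.inl ∘ Sum.inr) id
    let X3 : Matrix (Fin q) (Fin M) ℂ := X.submatrix Sum.inr id
    -- `E_t` : first `t` columns of `I_N`
    let Et : Matrix ((Fin t ⊕ Fin r) ⊕ Fin q) (Fin t) ℂ := fromRows (fromRows 1 0) 0
    let Shalf : Matrix ((Fin t ⊕ Fin r) ⊕ Fin q) ((Fin t ⊕ Fin r) ⊕ Fin q) ℂ :=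
      (hS.posSemidef.1.eigenvectorUnitary : Matrix ((Fin t ⊕ Fin r) ⊕ Fin q) ((Fin t ⊕ Fin r) ⊕ Fin q) ℂ) *
        diagonal ((↑) ∘ (√·) ∘ hS.posSemidef.1.eigenvalues) *
        (star hS.posSemidef.1.eigenvectorUnitary : Matrix ((Fin t ⊕ Fin r) ⊕ Fin q) ((Fin t ⊕ Fin r) ⊕ Fin q) ℂ)
    let A0 : Matrix ((Fin t ⊕ Fin r) ⊕ Fin q) (Fin t) ℂ := Shalf⁻¹ * Et
    let S2d3 : Matrix (Fin r) (Fin r) ℂ := S22 - S23 * S33⁻¹ * S32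
    let X2d3 : Matrix (Fin r) (Fin M) ℂ := X2 - S23 * S33⁻¹ * X3
    IsUnit S33 ∧ IsUnit S2d3 ∧
      (Shalf⁻¹ * X)ᴴ * projPerp A0 * (Shalf⁻¹ * X) =
        X2d3ᴴ * S2d3⁻¹ * X2d3 + X3ᴴ * S33⁻¹ * X3 := by
  intro S22 S23 S32 S33 X2 X3 Et Shalf A0 S2d3 X2d3
  let σ := (Equiv.sumAssoc (Fin t) (Fin r) (Fin q)).symm
  let E : Matrix ((Fin t ⊕ Fin r) ⊕ Fin q) (Fin t) ℂ := submatrix 1 id (σ ∘ Sum.inl)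
  let F : Matrix ((Fin t ⊕ Fin r) ⊕ Fin q) (Fin r ⊕ Fin q) ℂ := submatrix 1 id (σ ∘ Sum.inr)
  have hEt : Et = E := by
    ext ((i | i) | i) j <;> simp [Et, E, σ, one_apply]
  have hShalf : Shalf = CFC.sqrt S := hS.posSemidef.eigenvectorUnitary_mul_diagonal_sqrt_mul_star
  have hG : IsUnit (Eᴴ * S⁻¹ * E) :=
    hS.inv.isUnit_conjTranspose_one_submatrix_mul_mul (σ.injective.comp Sum.inl_injective)
  have hH : Fᴴ * S * F = fromBlocks S22 S23 S32 S33 := by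
    rw [conjTranspose_one_submatrix_mul, mul_one_submatrix]
    ext (i | i) (j | j) <;> rfl
  have hFX : Fᴴ * X = fromRows X2 X3 := by
    rw [conjTranspose_one_submatrix_mul]
    ext (i | i) j <;> rfl
  have hS33 : IsUnit S33 := (hS.submatrix Sum.inr_injective).isUnit
  have hS2d3 : IsUnit S2d3 := isUnit_schur_of_isUnit_fromBlocks hS33 <|
    hH ▸ hS.isUnit_conjTranspose_one_submatrix_mul_mul (σ.injective.comp Sum.inr_injective)
  have hX2d3 : X2d3ᴴ = X2ᴴ - X3ᴴ * S33⁻¹ * S32 := by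
    simp only [X2d3, S23, S32, S33, conjTranspose_sub, conjTranspose_mul, conjTranspose_nonsing_inv,
      conjTranspose_submatrix, hS.1.eq, Matrix.mul_assoc]
  refine ⟨hS33, hS2d3, ?_⟩
  calc (Shalf⁻¹ * X)ᴴ * projPerp A0 * (Shalf⁻¹ * X)
      = Xᴴ * (S⁻¹ - S⁻¹ * E * (Eᴴ * S⁻¹ * E)⁻¹ * Eᴴ * S⁻¹) * X := by
        rw [show A0 = Shalf⁻¹ * E from hEt ▸ rfl, conjTranspose_mul_projPerp_mul, hShalf,
          hS.posSemidef.conjTranspose_inv_sqrt_mul_inv_sqrt]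
    _ = (Fᴴ * X)ᴴ * (Fᴴ * S * F)⁻¹ * (Fᴴ * X) := by
        rw [inv_sub_inv_compression_eq_compl (E := E) (F := F) hS.isUnit
          (conjTranspose_one_submatrix_inl_mul_inr σ)
          (conjTranspose_one_submatrix_mul_self (σ.injective.comp Sum.inr_injective))
          (one_submatrix_inl_mul_conjTranspose_add_inr σ) hG]
        simp only [conjTranspose_mul, conjTranspose_conjTranspose, Matrix.mul_assoc]
    _ = X2d3ᴴ * S2d3⁻¹ * X2d3 + X3ᴴ * S33⁻¹ * X3 := by
        rw [hFX, hH, conjTranspose_fromRows_eq_fromCols_conjTranspose,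
          fromCols_mul_inv_fromBlocks_mul_fromRows hS33 hS2d3, hX2d3]

/-- Eq. (38) of the paper: with `A₀ = S^{-1/2} E_t`,
`(S^{-1/2}X)ᴴ P_{A₀}^⊥ (S^{-1/2}X) = X_{2.3}ᴴ S_{2.3}⁻¹ X_{2.3} + X₃ᴴ S₃₃⁻¹ X₃`. -/
theorem whitened_quadratic_form_H0
    (t r q M : ℕ) (ht : 0 < t) (hr : 0 < r) (hq : 0 < q) (hM : 0 < M)
    (S : Matrix ((Fin t ⊕ Fin r) ⊕ Fin q) ((Fin t ⊕ Fin r) ⊕ Fin q) ℂ) (hS : S.PosDef)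
    (X : Matrix ((Fin t ⊕ Fin r) ⊕ Fin q) (Fin M) ℂ) :
    let S22 : Matrix (Fin r) (Fin r) ℂ := S.submatrix (Sum.inl ∘ Sum.inr) (Sum.inl ∘ Sum.inr)
    let S23 : Matrix (Fin r) (Fin q) ℂ := S.submatrix (Sum.inl ∘ Sum.inr) Sum.inr
    let S32 : Matrix (Fin q) (Fin r) ℂ := S.submatrix Sum.inr (Sum.inl ∘ Sum.inr)
    let S33 : Matrix (Fin q) (Fin q) ℂ := S.submatrix Sum.inr Sum.inr
    let X2 : Matrix (Fin r) (Fin M) ℂ := X.submatrix (Sum.inl ∘ Sum.inr) id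
    let X3 : Matrix (Fin q) (Fin M) ℂ := X.submatrix Sum.inr id
    -- `E_t` : first `t` columns of `I_N`
    let Et : Matrix ((Fin t ⊕ Fin r) ⊕ Fin q) (Fin t) ℂ := fromRows (fromRows 1 0) 0
    let Shalf : Matrix ((Fin t ⊕ Fin r) ⊕ Fin q) ((Fin t ⊕ Fin r) ⊕ Fin q) ℂ :=
      (hS.posSemidef.1.eigenvectorUnitary : Matrix ((Fin t ⊕ Fin r) ⊕ Fin q) ((Fin t ⊕ Fin r) ⊕ Fin q) ℂ) *
        diagonal ((↑) ∘ (√·) ∘ hS.posSemidef.1.eigenvalues) *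
        (star hS.posSemidef.1.eigenvectorUnitary : Matrix ((Fin t ⊕ Fin r) ⊕ Fin q) ((Fin t ⊕ Fin r) ⊕ Fin q) ℂ)
    let A0 : Matrix ((Fin t ⊕ Fin r) ⊕ Fin q) (Fin t) ℂ := Shalf⁻¹ * Et
    let S2d3 : Matrix (Fin r) (Fin r) ℂ := S22 - S23 * S33⁻¹ * S32
    let X2d3 : Matrix (Fin r) (Fin M) ℂ := X2 - S23 * S33⁻¹ * X3
    IsUnit S33 ∧ IsUnit S2d3 ∧
      (Shalf⁻¹ * X)ᴴ * projPerp A0 * (Shalf⁻¹ * X) =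
        X2d3ᴴ * S2d3⁻¹ * X2d3 + X3ᴴ * S33⁻¹ * X3 :=
  whitened_quadratic_form_H0_general t r q M S hS X
end
end

section
/- Let t, r, q, M be positive integers, N = t + r + q, and let S ∈ ℂ^{N×N} be Hermitian positive definite with 3×3 block partition S = (S_{ij})_{i,j=1,2,3} conformal to (t, r, q). Let X ∈ ℂ^{N×M} with row blocks X₁ ∈ ℂ^{t×M}, X₂ ∈ ℂ^{r×M}, X₃ ∈ ℂ^{q×M}. Let A be the first t + r columns of I_N and A₁ = S^{-1/2}A. Then S₃₃ is invertible and (S^{-1/2}X)† P_{A₁}^⊥ (S^{-1/2}X) = X₃† S₃₃⁻¹ X₃. -/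
/-! Write `K = S^{1/2}`, `E₁ = [I; 0]` and `E₂ = [0; I]`. The columns of `K⁻¹E₁` and `KE₂` are
orthogonal, since `(K⁻¹E₁)ᴴ(KE₂) = E₁ᴴE₂ = 0`, and there are `N` of them, so they span `ℂᴺ` and
`P^⊥_{K⁻¹E₁} = P_{KE₂}`. In `(K⁻¹X)ᴴ K E₂ (E₂ᴴ S E₂)⁻¹ E₂ᴴ K (K⁻¹X)` the square roots cancel,
leaving `X₃ᴴ S₃₃⁻¹ X₃`. -/

open Matrix
open scoped ComplexOrder

noncomputable section

section Sqrt

variable {n : Type*} [Fintype n] [DecidableEq n]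

theorem Matrix.IsHermitian.cfc_isHermitian {A : Matrix n n ℂ} (hA : A.IsHermitian) (f : ℝ → ℝ) :
    (hA.cfc f).IsHermitian := by
  rw [← hA.cfc_eq]
  exact cfc_predicate f A

theorem Matrix.PosSemidef.cfc_sqrt_mul_self {A : Matrix n n ℂ} (hA : A.PosSemidef) :
    hA.1.cfc Real.sqrt * hA.1.cfc Real.sqrt = A := by
  rw [← hA.1.cfc_eq, ← cfc_mul Real.sqrt Real.sqrt A]
  conv_rhs => rw [← cfc_id' ℝ A hA.1.isSelfAdjoint]
  refine cfc_congr fun x hx => Real.mul_self_sqrt ?_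
  rw [hA.1.spectrum_real_eq_range_eigenvalues] at hx
  obtain ⟨i, rfl⟩ := hx
  exact hA.eigenvalues_nonneg i

end Sqrt

section Projection

variable {n m k : Type*} [Fintype n]

theorem conjTranspose_fromCols_mul_fromCols {F : Matrix n m ℂ} {G : Matrix n k ℂ}
    (hFG : Fᴴ * G = 0) : (fromCols F G)ᴴ * fromCols F G = fromBlocks (Fᴴ * F) 0 0 (Gᴴ * G) := by
  have hGF : Gᴴ * F = 0 := by
    rw [← conjTranspose_conjTranspose (Gᴴ * F), conjTranspose_mul, conjTranspose_conjTranspose,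
      hFG, conjTranspose_zero]
  rw [conjTranspose_fromCols_eq_fromRows_conjTranspose, fromRows_mul_fromCols, hFG, hGF]

variable [Fintype m] [Fintype k] [DecidableEq n] [DecidableEq m] [DecidableEq k]

theorem proj_eq_one_of_isUnit_conjTranspose_mul_self {W : Matrix n n ℂ}
    (hW : IsUnit (Wᴴ * W)) : proj W = 1 := by
  have hdet : IsUnit W.det := by
    rw [isUnit_iff_isUnit_det, det_mul, det_conjTranspose] at hW
    exact isUnit_of_mul_isUnit_right hW
  have hdet' : IsUnit Wᴴ.det := by rwa [det_conjTranspose, isUnit_star]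
  rw [proj, Matrix.mul_inv_rev, ← Matrix.mul_assoc, mul_nonsing_inv _ hdet, Matrix.one_mul,
    nonsing_inv_mul _ hdet']

theorem proj_fromCols {F : Matrix n m ℂ} {G : Matrix n k ℂ} (hFG : Fᴴ * G = 0)
    (hF : IsUnit (Fᴴ * F)) (hG : IsUnit (Gᴴ * G)) :
    proj (fromCols F G) = proj F + proj G := by
  rw [proj, conjTranspose_fromCols_mul_fromCols hFG,
    inv_fromBlocks_zero₂₁_of_isUnit_iff _ _ _ (iff_of_true hF hG),
    conjTranspose_fromCols_eq_fromRows_conjTranspose, fromCols_mul_fromBlocks,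
    fromCols_mul_fromRows]
  simp [proj]

theorem projPerp_eq_proj_of_conjTranspose_mul_eq_zero {F : Matrix (m ⊕ k) m ℂ}
    {G : Matrix (m ⊕ k) k ℂ} (hFG : Fᴴ * G = 0) (hF : IsUnit (Fᴴ * F)) (hG : IsUnit (Gᴴ * G)) :
    projPerp F = proj G := by
  have hW : IsUnit ((fromCols F G)ᴴ * fromCols F G) := by
    rw [conjTranspose_fromCols_mul_fromCols hFG, isUnit_fromBlocks_zero₂₁]
    exact ⟨hF, hG⟩
  rw [projPerp, ← proj_eq_one_of_isUnit_conjTranspose_mul_self hW, proj_fromCols hFG hF hG,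
    add_sub_cancel_left]

end Projection

section Whitening

variable {m k p : Type*} [Fintype m] [Fintype k]

theorem mul_fromRows_one_zero [DecidableEq m] (Y : Matrix p (m ⊕ k) ℂ) :
    Y * fromRows (1 : Matrix m m ℂ) (0 : Matrix k m ℂ) = Y.submatrix id Sum.inl := by
  rw [← fromCols_toCols Y, fromCols_mul_fromRows, Matrix.mul_one, Matrix.mul_zero, add_zero]
  rfl

theorem mul_fromRows_zero_one [DecidableEq k] (Y : Matrix p (m ⊕ k) ℂ) :
    Y * fromRows (0 : Matrix m k ℂ) (1 : Matrix k k ℂ) = Y.submatrix id Sum.inr := by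
  rw [← fromCols_toCols Y, fromCols_mul_fromRows, Matrix.mul_one, Matrix.mul_zero, zero_add]
  rfl

theorem conjTranspose_fromRows_one_zero_mul [DecidableEq m] (Y : Matrix (m ⊕ k) p ℂ) :
    (fromRows (1 : Matrix m m ℂ) (0 : Matrix k m ℂ))ᴴ * Y = Y.submatrix Sum.inl id := by
  rw [conjTranspose_fromRows_eq_fromCols_conjTranspose, ← fromRows_toRows Y,
    fromCols_mul_fromRows, conjTranspose_zero, conjTranspose_one, Matrix.one_mul, Matrix.zero_mul,
    add_zero]
  rfl

theorem conjTranspose_fromRows_zero_one_mul [DecidableEq k] (Y : Matrix (m ⊕ k) p ℂ) :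
    (fromRows (0 : Matrix m k ℂ) (1 : Matrix k k ℂ))ᴴ * Y = Y.submatrix Sum.inr id := by
  rw [conjTranspose_fromRows_eq_fromCols_conjTranspose, ← fromRows_toRows Y,
    fromCols_mul_fromRows, conjTranspose_zero, conjTranspose_one, Matrix.one_mul, Matrix.zero_mul,
    zero_add]
  rfl

theorem conjTranspose_inv_mul_projPerp_inv_mul [DecidableEq m] [DecidableEq k]
    {S K : Matrix (m ⊕ k) (m ⊕ k) ℂ} (hS : S.PosDef) (hK : K.IsHermitian) (hKK : K * K = S) (X : Matrix (m ⊕ k) p ℂ) :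
    (K⁻¹ * X)ᴴ * projPerp (K⁻¹ * fromRows (1 : Matrix m m ℂ) (0 : Matrix k m ℂ)) * (K⁻¹ * X) =
      (X.submatrix Sum.inr id)ᴴ * (S.submatrix Sum.inr Sum.inr)⁻¹ * X.submatrix Sum.inr id := by
  set E₁ := fromRows (1 : Matrix m m ℂ) (0 : Matrix k m ℂ)
  set E₂ := fromRows (0 : Matrix m k ℂ) (1 : Matrix k k ℂ)
  have hdet : IsUnit K.det := by
    have hSdet : IsUnit (K.det * K.det) := by
      rw [← det_mul, hKK, ← isUnit_iff_isUnit_det]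
      exact hS.isUnit
    exact isUnit_of_mul_isUnit_left hSdet
  have hKinv : K⁻¹ᴴ = K⁻¹ := by rw [conjTranspose_nonsing_inv, hK.eq]
  have horth : (K⁻¹ * E₁)ᴴ * (K * E₂) = 0 := by
    rw [conjTranspose_mul, hKinv, Matrix.mul_assoc, nonsing_inv_mul_cancel_left _ _ hdet,
      conjTranspose_fromRows_one_zero_mul]
    exact toRows₁_fromRows _ _
  have hgram₁ : (K⁻¹ * E₁)ᴴ * (K⁻¹ * E₁) = S⁻¹.submatrix Sum.inl Sum.inl := by
    rw [conjTranspose_mul, hKinv, Matrix.mul_assoc, ← Matrix.mul_assoc K⁻¹, ← Matrix.mul_inv_rev,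
      hKK, mul_fromRows_one_zero, conjTranspose_fromRows_one_zero_mul]
    rfl
  have hgram₂ : (K * E₂)ᴴ * (K * E₂) = S.submatrix Sum.inr Sum.inr := by
    rw [conjTranspose_mul, hK.eq, Matrix.mul_assoc, ← Matrix.mul_assoc K, hKK,
      mul_fromRows_zero_one, conjTranspose_fromRows_zero_one_mul]
    rfl
  rw [projPerp_eq_proj_of_conjTranspose_mul_eq_zero horth
    (hgram₁ ▸ (hS.inv.submatrix Sum.inl_injective).isUnit)
    (hgram₂ ▸ (hS.submatrix Sum.inr_injective).isUnit), proj, hgram₂]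
  simp only [conjTranspose_mul, hK.eq, hKinv, Matrix.mul_assoc]
  rw [nonsing_inv_mul_cancel_left _ _ hdet, mul_nonsing_inv_cancel_left _ _ hdet,
    conjTranspose_fromRows_zero_one_mul, ← Matrix.mul_assoc Xᴴ, mul_fromRows_zero_one]
  rfl

end Whitening

theorem whitened_quadratic_form_H1_general
    (t r q M : ℕ)
    (S : Matrix ((Fin t ⊕ Fin r) ⊕ Fin q) ((Fin t ⊕ Fin r) ⊕ Fin q) ℂ) (hS : S.PosDef)
    (X : Matrix ((Fin t ⊕ Fin r) ⊕ Fin q) (Fin M) ℂ) :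
    let S33 : Matrix (Fin q) (Fin q) ℂ := S.submatrix Sum.inr Sum.inr
    let X3 : Matrix (Fin q) (Fin M) ℂ := X.submatrix Sum.inr id
    -- `A` : first `t + r` columns of `I_N`
    let A : Matrix ((Fin t ⊕ Fin r) ⊕ Fin q) (Fin t ⊕ Fin r) ℂ := fromRows 1 0
    let Shalf : Matrix ((Fin t ⊕ Fin r) ⊕ Fin q) ((Fin t ⊕ Fin r) ⊕ Fin q) ℂ :=
      hS.posSemidef.1.eigenvectorUnitary.1 *
        diagonal ((↑) ∘ Real.sqrt ∘ hS.posSemidef.1.eigenvalues) *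
        (star hS.posSemidef.1.eigenvectorUnitary : Matrix ((Fin t ⊕ Fin r) ⊕ Fin q) ((Fin t ⊕ Fin r) ⊕ Fin q) ℂ)
    let A1 : Matrix ((Fin t ⊕ Fin r) ⊕ Fin q) (Fin t ⊕ Fin r) ℂ := Shalf⁻¹ * A
    IsUnit S33 ∧
      (Shalf⁻¹ * X)ᴴ * projPerp A1 * (Shalf⁻¹ * X) = X3ᴴ * S33⁻¹ * X3 :=
  -- `Shalf` is, by definition, `hS.posSemidef.1.cfc Real.sqrt`.
  ⟨(hS.submatrix Sum.inr_injective).isUnit,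
    conjTranspose_inv_mul_projPerp_inv_mul hS (hS.posSemidef.1.cfc_isHermitian Real.sqrt)
      hS.posSemidef.cfc_sqrt_mul_self X⟩

/-- Eq. (39) of the paper: with `A₁ = S^{-1/2} A` and `A` the first `t + r` columns of `I_N`,
`(S^{-1/2}X)ᴴ P_{A₁}^⊥ (S^{-1/2}X) = X₃ᴴ S₃₃⁻¹ X₃`. -/
theorem whitened_quadratic_form_H1
    (t r q M : ℕ) (ht : 0 < t) (hr : 0 < r) (hq : 0 < q) (hM : 0 < M)
    (S : Matrix ((Fin t ⊕ Fin r) ⊕ Fin q) ((Fin t ⊕ Fin r) ⊕ Fin q) ℂ) (hS : S.PosDef)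
    (X : Matrix ((Fin t ⊕ Fin r) ⊕ Fin q) (Fin M) ℂ) :
    let S33 : Matrix (Fin q) (Fin q) ℂ := S.submatrix Sum.inr Sum.inr
    let X3 : Matrix (Fin q) (Fin M) ℂ := X.submatrix Sum.inr id
    -- `A` : first `t + r` columns of `I_N`
    let A : Matrix ((Fin t ⊕ Fin r) ⊕ Fin q) (Fin t ⊕ Fin r) ℂ := fromRows 1 0
    let Shalf : Matrix ((Fin t ⊕ Fin r) ⊕ Fin q) ((Fin t ⊕ Fin r) ⊕ Fin q) ℂ :=
      hS.posSemidef.1.eigenvectorUnitary.1 *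
        diagonal ((↑) ∘ Real.sqrt ∘ hS.posSemidef.1.eigenvalues) *
        (star hS.posSemidef.1.eigenvectorUnitary : Matrix ((Fin t ⊕ Fin r) ⊕ Fin q) ((Fin t ⊕ Fin r) ⊕ Fin q) ℂ)
    let A1 : Matrix ((Fin t ⊕ Fin r) ⊕ Fin q) (Fin t ⊕ Fin r) ℂ := Shalf⁻¹ * A
    IsUnit S33 ∧
      (Shalf⁻¹ * X)ᴴ * projPerp A1 * (Shalf⁻¹ * X) = X3ᴴ * S33⁻¹ * X3 :=
  whitened_quadratic_form_H1_general t r q M S hS X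
end
end

section
/- Let S ∈ ℂ^{N×N} be Hermitian positive definite, z ∈ ℂ^N, and A ∈ ℂ^{N×r} of full column rank. Set S₀ = S + z z†, z₁ = S^{-1/2}z, and A₁ = S^{-1/2}A. Then A† S₀⁻¹ A is invertible and z† S₀⁻¹ A (A† S₀⁻¹ A)⁻¹ A† S₀⁻¹ z = [ z₁† P_{A₁} z₁ ] / [ (1 + z₁† z₁)(1 + z₁† P_{A₁}^⊥ z₁) ]; that is, the Rao statistic for adaptive vector-subspace detection of a point-like target admits the closed form η_rao = (1/(1 + z₁† z₁)) · z₁† P_{A₁} z₁ / (1 + z₁† P_{A₁}^⊥ z₁). -/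
/-!
Write `c = zᴴ S⁻¹ z`, `u = Aᴴ S⁻¹ z`, `G = Aᴴ S⁻¹ A` and `p = uᴴ G⁻¹ u`. By Sherman–Morrison,
`S₀⁻¹ z = S⁻¹ z / (1 + c)` and `Aᴴ S₀⁻¹ A = G - u uᴴ / (1 + c)`, so the statistic is
`uᴴ (G - u uᴴ / (1 + c))⁻¹ u / (1 + c)²`. Since `(G - t u uᴴ) G⁻¹ u = (1 - t p) u`, this equals
`p / ((1 + c) (1 + c - p))`. Whitening by `S^{1/2}` turns `c` into `z₁ᴴ z₁` and `p` into
`z₁ᴴ P_{A₁} z₁`.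
-/

open Matrix
open scoped ComplexOrder

noncomputable section

namespace Matrix

section Field

variable {n K : Type*} [Fintype n] [DecidableEq n] [Field K]

theorem inv_mulVec_eq_of_mulVec_eq_smul {M : Matrix n n K} (hM : IsUnit M) {x u : n → K} {a : K}
    (ha : a ≠ 0) (h : M *ᵥ x = a • u) : M⁻¹ *ᵥ u = a⁻¹ • x := by
  have hx : x = a • M⁻¹ *ᵥ u := by
    rw [← mulVec_smul, ← h, mulVec_mulVec, nonsing_inv_mul _ ((isUnit_iff_isUnit_det M).1 hM),
      one_mulVec]
  rw [hx, smul_smul, inv_mul_cancel₀ ha, one_smul]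

theorem inv_add_vecMulVec {S : Matrix n n K} (hS : IsUnit S) (a b : n → K)
    (h : 1 + b ⬝ᵥ (S⁻¹ *ᵥ a) ≠ 0) :
    (S + vecMulVec a b)⁻¹ =
      S⁻¹ - (1 + b ⬝ᵥ (S⁻¹ *ᵥ a))⁻¹ • vecMulVec (S⁻¹ *ᵥ a) (b ᵥ* S⁻¹) := by
  have hSS : S * S⁻¹ = 1 := mul_nonsing_inv _ ((isUnit_iff_isUnit_det S).1 hS)
  refine inv_eq_right_inv ?_
  rw [mul_sub, add_mul, hSS, mul_smul_comm, add_mul, mul_vecMulVec, mulVec_mulVec, hSS,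
    one_mulVec, vecMulVec_mul, vecMulVec_mul_vecMulVec, vecMulVec_smul]
  match_scalars
  · ring
  · field_simp
    ring

theorem inv_add_vecMulVec_mulVec {S : Matrix n n K} (hS : IsUnit S) (a b : n → K)
    (h : 1 + b ⬝ᵥ (S⁻¹ *ᵥ a) ≠ 0) :
    (S + vecMulVec a b)⁻¹ *ᵥ a = (1 + b ⬝ᵥ (S⁻¹ *ᵥ a))⁻¹ • (S⁻¹ *ᵥ a) := by
  rw [inv_add_vecMulVec hS a b h, sub_mulVec, smul_mulVec, vecMulVec_mulVec, op_smul_eq_smul,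
    ← dotProduct_mulVec, smul_smul]
  match_scalars
  field_simp
  ring

theorem dotProduct_inv_sub_smul_vecMulVec_mulVec {G : Matrix n n K} (hG : IsUnit G) (t : K)
    (u v : n → K) (hM : IsUnit (G - t • vecMulVec u v)) :
    v ⬝ᵥ ((G - t • vecMulVec u v)⁻¹ *ᵥ u) =
      v ⬝ᵥ (G⁻¹ *ᵥ u) / (1 - t * (v ⬝ᵥ (G⁻¹ *ᵥ u))) := by
  set x := G⁻¹ *ᵥ u
  have hGx : G *ᵥ x = u := by
    rw [mulVec_mulVec, mul_nonsing_inv _ ((isUnit_iff_isUnit_det G).1 hG), one_mulVec]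
  have hMx : (G - t • vecMulVec u v) *ᵥ x = (1 - t * (v ⬝ᵥ x)) • u := by
    rw [sub_mulVec, smul_mulVec, vecMulVec_mulVec, hGx, op_smul_eq_smul, smul_smul, sub_smul,
      one_smul]
  have hne : 1 - t * (v ⬝ᵥ x) ≠ 0 := by
    intro h0
    have hx : x = 0 := mulVec_injective_of_isUnit hM (by rw [hMx, h0, zero_smul, mulVec_zero])
    rw [hx, dotProduct_zero, mul_zero, sub_zero] at h0
    exact one_ne_zero h0
  rw [inv_mulVec_eq_of_mulVec_eq_smul hM hne hMx, dotProduct_smul, smul_eq_mul, div_eq_inv_mul]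

omit [Fintype n] [DecidableEq n] in
theorem mulVec_injective_of_rank_eq_card {m : Type*} [Fintype m] {A : Matrix n m K}
    (hA : A.rank = Fintype.card m) : Function.Injective A.mulVec :=
  mulVec_injective_iff.2 <| linearIndependent_iff_card_eq_finrank_span.2 <| by
    rw [← hA, rank_eq_finrank_span_cols]; rfl

end Field

section RCLike

variable {n m 𝕜 : Type*} [Fintype n] [Fintype m] [DecidableEq n] [DecidableEq m] [RCLike 𝕜]

omit [DecidableEq n] in
theorem IsHermitian.star_mulVec_dotProduct {M : Matrix n n 𝕜} (hM : M.IsHermitian) (x y : n → 𝕜) :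
    star (M *ᵥ x) ⬝ᵥ y = star x ⬝ᵥ (M *ᵥ y) := by
  rw [star_mulVec, hM.eq, dotProduct_mulVec]

def PosSemidef.spectralSqrt {S : Matrix n n 𝕜} (hS : S.PosSemidef) : Matrix n n 𝕜 :=
  hS.1.eigenvectorUnitary.1 * diagonal (RCLike.ofReal ∘ fun i => √(hS.1.eigenvalues i)) *
    (star hS.1.eigenvectorUnitary : Matrix n n 𝕜)

theorem PosDef.isUnit_conjTranspose_mul_inv_mul {S : Matrix n n 𝕜} (hS : S.PosDef)
    {A : Matrix n m 𝕜} (hA : Function.Injective A.mulVec) : IsUnit (Aᴴ * S⁻¹ * A) :=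
  (hS.inv.conjTranspose_mul_mul_same hA).isUnit

open scoped MatrixOrder in
theorem PosSemidef.spectralSqrt_eq_sqrt {S : Matrix n n 𝕜} (hS : S.PosSemidef) :
    hS.spectralSqrt = CFC.sqrt S := by
  rw [CFC.sqrt_eq_real_sqrt S hS.nonneg, cfcₙ_eq_cfc, hS.1.cfc_eq]
  rfl

open scoped MatrixOrder in
theorem PosSemidef.isHermitian_spectralSqrt {S : Matrix n n 𝕜} (hS : S.PosSemidef) :
    hS.spectralSqrt.IsHermitian :=
  hS.spectralSqrt_eq_sqrt ▸ (CFC.sqrt_nonneg S).posSemidef.isHermitian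

open scoped MatrixOrder in
theorem PosSemidef.spectralSqrt_mul_self {S : Matrix n n 𝕜} (hS : S.PosSemidef) :
    hS.spectralSqrt * hS.spectralSqrt = S :=
  hS.spectralSqrt_eq_sqrt ▸ CFC.sqrt_mul_sqrt_self S hS.nonneg

end RCLike

end Matrix

section RaoStatistic

variable {n m 𝕜 : Type*} [Fintype n] [Fintype m] [DecidableEq n] [DecidableEq m] [RCLike 𝕜]

-- The Rao statistic is `projQuadForm S₀ A z`, and `projQuadForm S A z` is `z₁ᴴ P_{A₁} z₁`.
def projQuadForm (S : Matrix n n 𝕜) (A : Matrix n m 𝕜) (z : n → 𝕜) : 𝕜 :=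
  star z ⬝ᵥ ((S⁻¹ * A * (Aᴴ * S⁻¹ * A)⁻¹ * Aᴴ * S⁻¹) *ᵥ z)

theorem projQuadForm_eq_dotProduct {S : Matrix n n 𝕜} (hS : S.IsHermitian) (A : Matrix n m 𝕜)
    (z : n → 𝕜) :
    projQuadForm S A z =
      star (Aᴴ *ᵥ (S⁻¹ *ᵥ z)) ⬝ᵥ ((Aᴴ * S⁻¹ * A)⁻¹ *ᵥ (Aᴴ *ᵥ (S⁻¹ *ᵥ z))) := by
  rw [projQuadForm, star_mulVec, conjTranspose_conjTranspose, ← dotProduct_mulVec,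
    hS.inv.star_mulVec_dotProduct]
  simp only [mulVec_mulVec, Matrix.mul_assoc]

theorem projQuadForm_mul_self {H : Matrix n n 𝕜} (hH : H.IsHermitian) (A : Matrix n m 𝕜)
    (z : n → 𝕜) : projQuadForm (H * H) A z = projQuadForm 1 (H⁻¹ * A) (H⁻¹ *ᵥ z) := by
  rw [projQuadForm, projQuadForm, inv_one, conjTranspose_mul, hH.inv.eq,
    hH.inv.star_mulVec_dotProduct, Matrix.mul_inv_rev]
  simp only [mulVec_mulVec, Matrix.mul_one, Matrix.one_mul, Matrix.mul_assoc]

theorem projQuadForm_add_vecMulVec_self {S : Matrix n n 𝕜} (hS : S.PosDef) {A : Matrix n m 𝕜}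
    (hA : Function.Injective A.mulVec) (z : n → 𝕜) :
    projQuadForm (S + vecMulVec z (star z)) A z =
      projQuadForm S A z / ((1 + star z ⬝ᵥ (S⁻¹ *ᵥ z)) *
        (1 + star z ⬝ᵥ (S⁻¹ *ᵥ z) - projQuadForm S A z)) := by
  set c := star z ⬝ᵥ (S⁻¹ *ᵥ z)
  set u := Aᴴ *ᵥ (S⁻¹ *ᵥ z)
  set p := projQuadForm S A z
  have hS₀ : (S + vecMulVec z (star z)).PosDef :=
    hS.add_posSemidef (posSemidef_vecMulVec_self_star z)
  have hc : 0 < 1 + c :=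
    add_pos_of_pos_of_nonneg one_pos (hS.inv.posSemidef.dotProduct_mulVec_nonneg z)
  have hstar : star (1 + c)⁻¹ = (1 + c)⁻¹ := by
    rw [star_inv₀, (IsSelfAdjoint.of_nonneg hc.le).star_eq]
  have hG : Aᴴ * (S + vecMulVec z (star z))⁻¹ * A =
      Aᴴ * S⁻¹ * A - (1 + c)⁻¹ • vecMulVec u (star u) := by
    rw [inv_add_vecMulVec hS.isUnit z (star z) hc.ne', Matrix.mul_sub, Matrix.sub_mul,
      Matrix.mul_smul, Matrix.smul_mul, mul_vecMulVec, vecMulVec_mul, star_mulVec,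
      conjTranspose_conjTranspose, star_mulVec, hS.isHermitian.inv.eq, vecMul_vecMul]
  have hden : (1 + c) * (1 + c - p) = (1 + c) * (1 + c) * (1 - (1 + c)⁻¹ * p) := by
    field_simp
  rw [projQuadForm_eq_dotProduct hS₀.isHermitian,
    inv_add_vecMulVec_mulVec hS.isUnit z (star z) hc.ne', hG, mulVec_smul, star_smul, hstar,
    mulVec_smul, smul_dotProduct, dotProduct_smul,
    dotProduct_inv_sub_smul_vecMulVec_mulVec (hS.isUnit_conjTranspose_mul_inv_mul hA) _ _ _
      (hG ▸ hS₀.isUnit_conjTranspose_mul_inv_mul hA),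
    ← projQuadForm_eq_dotProduct hS.isHermitian, hden, smul_smul, smul_eq_mul, div_eq_mul_inv,
    div_eq_mul_inv, mul_inv, mul_inv]
  ring

theorem projQuadForm_one (A : Matrix n m ℂ) (z : n → ℂ) :
    projQuadForm 1 A z = star z ⬝ᵥ (proj A *ᵥ z) := by
  simp only [projQuadForm, proj, inv_one, Matrix.mul_one, Matrix.one_mul]

end RaoStatistic

theorem rao_closed_form_pointlike_general
    (N r : ℕ)
    (S : Matrix (Fin N) (Fin N) ℂ) (hS : S.PosDef)
    (z : Fin N → ℂ)
    (A : Matrix (Fin N) (Fin r) ℂ) (hA : A.rank = r) :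
    let S0 : Matrix (Fin N) (Fin N) ℂ := S + vecMulVec z (star z)
    let Shalf : Matrix (Fin N) (Fin N) ℂ := hS.posSemidef.1.eigenvectorUnitary.1 *
      diagonal ((↑) ∘ (fun i => √(hS.posSemidef.1.eigenvalues i))) *
      (star hS.posSemidef.1.eigenvectorUnitary : Matrix (Fin N) (Fin N) ℂ)
    let z1 : Fin N → ℂ := Shalf⁻¹ *ᵥ z
    let A1 : Matrix (Fin N) (Fin r) ℂ := Shalf⁻¹ * A
    IsUnit (Aᴴ * S0⁻¹ * A) ∧
      star z ⬝ᵥ ((S0⁻¹ * A * (Aᴴ * S0⁻¹ * A)⁻¹ * Aᴴ * S0⁻¹) *ᵥ z) =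
        (star z1 ⬝ᵥ (proj A1 *ᵥ z1)) /
          ((1 + star z1 ⬝ᵥ z1) * (1 + star z1 ⬝ᵥ (projPerp A1 *ᵥ z1))) := by
  intro S0 Shalf z1 A1
  have hH : Shalf.IsHermitian := hS.posSemidef.isHermitian_spectralSqrt
  have hHH : Shalf * Shalf = S := hS.posSemidef.spectralSqrt_mul_self
  have hAinj : Function.Injective A.mulVec :=
    mulVec_injective_of_rank_eq_card (by rwa [Fintype.card_fin])
  have hp : projQuadForm S A z = star z1 ⬝ᵥ (proj A1 *ᵥ z1) := by
    rw [← hHH, projQuadForm_mul_self hH, projQuadForm_one]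
  have hc : star z ⬝ᵥ (S⁻¹ *ᵥ z) = star z1 ⬝ᵥ z1 := by
    rw [← hHH, Matrix.mul_inv_rev, ← mulVec_mulVec, ← hH.inv.star_mulVec_dotProduct]
  refine ⟨(hS.add_posSemidef (posSemidef_vecMulVec_self_star z)).isUnit_conjTranspose_mul_inv_mul
    hAinj, ?_⟩
  rw [projPerp, sub_mulVec, one_mulVec, dotProduct_sub, ← hp, ← hc, ← add_sub_assoc]
  exact projQuadForm_add_vecMulVec_self hS hAinj z

/-- Eq. (Rao vector subspace final) of the paper: with `S₀ = S + z zᴴ`, `z₁ = S^{-1/2} z`,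
`A₁ = S^{-1/2} A`, the Rao statistic admits the closed form
`zᴴ S₀⁻¹ A (Aᴴ S₀⁻¹ A)⁻¹ Aᴴ S₀⁻¹ z = z₁ᴴ P_{A₁} z₁ / [(1 + z₁ᴴ z₁)(1 + z₁ᴴ P_{A₁}^⊥ z₁)]`. -/
theorem rao_closed_form_pointlike
    (N r : ℕ) (hN : 0 < N) (hr : 0 < r)
    (S : Matrix (Fin N) (Fin N) ℂ) (hS : S.PosDef)
    (z : Fin N → ℂ)
    (A : Matrix (Fin N) (Fin r) ℂ) (hA : A.rank = r) :
    let S0 : Matrix (Fin N) (Fin N) ℂ := S + vecMulVec z (star z)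
    let Shalf : Matrix (Fin N) (Fin N) ℂ := hS.posSemidef.1.eigenvectorUnitary.1 *
      diagonal ((↑) ∘ (fun i => √(hS.posSemidef.1.eigenvalues i))) *
      (star hS.posSemidef.1.eigenvectorUnitary : Matrix (Fin N) (Fin N) ℂ)
    let z1 : Fin N → ℂ := Shalf⁻¹ *ᵥ z
    let A1 : Matrix (Fin N) (Fin r) ℂ := Shalf⁻¹ * A
    IsUnit (Aᴴ * S0⁻¹ * A) ∧
      star z ⬝ᵥ ((S0⁻¹ * A * (Aᴴ * S0⁻¹ * A)⁻¹ * Aᴴ * S0⁻¹) *ᵥ z) =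
        (star z1 ⬝ᵥ (proj A1 *ᵥ z1)) /
          ((1 + star z1 ⬝ᵥ z1) * (1 + star z1 ⬝ᵥ (projPerp A1 *ᵥ z1))) :=
  rao_closed_form_pointlike_general N r S hS z A hA
end
end

section
/- Let S ∈ ℂ^{N×N} be Hermitian positive definite, Z_e ∈ ℂ^{N×M}, and a ∈ ℂ^N. Set S₀ = S + Z_e Z_e†. Then S₀ is Hermitian positive definite, I_M + Z_e† S⁻¹ Z_e is invertible, and Z_e† S₀⁻¹ a = (I_M + Z_e† S⁻¹ Z_e)⁻¹ (Z_e† S⁻¹ a). Consequently, for a ≠ 0 the Gradient statistic K·Re{ (Z_e† S⁻¹ a)† (Z_e† S₀⁻¹ a) } / (a† S⁻¹ a) for a range-spread target equals K·(Z_e† S⁻¹ a)† (I_M + Z_e† S⁻¹ Z_e)⁻¹ (Z_e† S⁻¹ a) / (a† S⁻¹ a), i.e., K times the GLR quantity η′; hence the Gradient test is statistically equivalent to the GLRT for range-spread targets. -/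
/-!
Multiplying `S₀ = S + Z Zᴴ` on the left by `Zᴴ S⁻¹` gives the push-through identity
`Zᴴ S⁻¹ S₀ = (I + Zᴴ S⁻¹ Z) Zᴴ`, i.e. `Zᴴ S₀⁻¹ = (I + Zᴴ S⁻¹ Z)⁻¹ Zᴴ S⁻¹`; both inverses exist
because `S₀` and `I + Zᴴ S⁻¹ Z` are positive definite. Applied to `a`, this turns the Gradient
statistic into the quadratic form of the Hermitian matrix `(I + Zᴴ S⁻¹ Z)⁻¹` at
`u = Zᴴ S⁻¹ a`, which is real, so taking the real part changes nothing.
-/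

open Matrix
open scoped ComplexOrder

namespace Matrix

variable {n m : Type*} [Fintype n] [Fintype m]

theorem PosDef.add_mul_conjTranspose_self {𝕜 : Type*} [RCLike 𝕜] {S : Matrix n n 𝕜}
    (hS : S.PosDef) (Z : Matrix n m 𝕜) : (S + Z * Zᴴ).PosDef :=
  hS.add_posSemidef (posSemidef_self_mul_conjTranspose Z)

theorem PosDef.one_add_conjTranspose_mul_inv_mul [DecidableEq n] [DecidableEq m] {𝕜 : Type*}
    [RCLike 𝕜] {S : Matrix n n 𝕜} (hS : S.PosDef) (Z : Matrix n m 𝕜) :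
    (1 + Zᴴ * S⁻¹ * Z).PosDef := by
  refine PosDef.one.add_posSemidef ?_
  simpa using hS.inv.posSemidef.mul_mul_conjTranspose_same Zᴴ

theorem mul_inv_add_mul_eq_inv_one_add_mul_mul [DecidableEq n] [DecidableEq m] {R : Type*}
    [CommRing R] {S : Matrix n n R} (Z : Matrix n m R) (W : Matrix m n R) (hS : IsUnit S)
    (hSZW : IsUnit (S + Z * W)) (hD : IsUnit (1 + W * S⁻¹ * Z)) :
    W * (S + Z * W)⁻¹ = (1 + W * S⁻¹ * Z)⁻¹ * (W * S⁻¹) := by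
  have push : W * S⁻¹ * (S + Z * W) = (1 + W * S⁻¹ * Z) * W := by
    rw [Matrix.mul_add, Matrix.add_mul, Matrix.one_mul,
      nonsing_inv_mul_cancel_right S W ((isUnit_iff_isUnit_det S).mp hS), Matrix.mul_assoc _ Z W]
  calc W * (S + Z * W)⁻¹
      = (1 + W * S⁻¹ * Z)⁻¹ * ((1 + W * S⁻¹ * Z) * W) * (S + Z * W)⁻¹ := by
        rw [← Matrix.mul_assoc, nonsing_inv_mul _ ((isUnit_iff_isUnit_det _).mp hD),
          Matrix.one_mul]
    _ = (1 + W * S⁻¹ * Z)⁻¹ * (W * S⁻¹) := by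
        rw [← push, Matrix.mul_assoc, Matrix.mul_assoc (W * S⁻¹),
          mul_nonsing_inv _ ((isUnit_iff_isUnit_det _).mp hSZW), Matrix.mul_one]

theorem IsHermitian.coe_re_star_dotProduct_mulVec_self {𝕜 : Type*} [RCLike 𝕜]
    {A : Matrix n n 𝕜} (hA : A.IsHermitian) (x : n → 𝕜) :
    (RCLike.re (star x ⬝ᵥ A *ᵥ x) : 𝕜) = star x ⬝ᵥ A *ᵥ x :=
  RCLike.conj_eq_iff_re.mp (RCLike.conj_eq_iff_im.mpr (hA.im_star_dotProduct_mulVec_self x))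

end Matrix

theorem gradient_equals_glr_range_spread_general
    (N M : ℕ)
    (S : Matrix (Fin N) (Fin N) ℂ) (hS : S.PosDef)
    (Ze : Matrix (Fin N) (Fin M) ℂ) (a : Fin N → ℂ) :
    let S0 : Matrix (Fin N) (Fin N) ℂ := S + Ze * Zeᴴ
    let D0 : Matrix (Fin M) (Fin M) ℂ := 1 + Zeᴴ * S⁻¹ * Ze
    let u : Fin M → ℂ := Zeᴴ *ᵥ (S⁻¹ *ᵥ a)
    S0.PosDef ∧ IsUnit D0 ∧
      Zeᴴ *ᵥ (S0⁻¹ *ᵥ a) = D0⁻¹ *ᵥ u ∧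
      (a ≠ 0 → ∀ Kc : ℝ,
        (Kc : ℂ) * (((star u ⬝ᵥ (Zeᴴ *ᵥ (S0⁻¹ *ᵥ a))).re : ℂ)) / (star a ⬝ᵥ (S⁻¹ *ᵥ a)) =
          (Kc : ℂ) * (star u ⬝ᵥ (D0⁻¹ *ᵥ u)) / (star a ⬝ᵥ (S⁻¹ *ᵥ a))) := by
  intro S0 D0 u
  have hS0 : S0.PosDef := hS.add_mul_conjTranspose_self Ze
  have hD0 : D0.PosDef := hS.one_add_conjTranspose_mul_inv_mul Ze
  have hvec : Zeᴴ *ᵥ (S0⁻¹ *ᵥ a) = D0⁻¹ *ᵥ u := by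
    rw [mulVec_mulVec, mulVec_mulVec, mulVec_mulVec, Matrix.mul_assoc,
      mul_inv_add_mul_eq_inv_one_add_mul_mul Ze Zeᴴ hS.isUnit hS0.isUnit hD0.isUnit]
  refine ⟨hS0, hD0.isUnit, hvec, fun _ Kc => ?_⟩
  rw [hvec]
  congr 2
  exact hD0.isHermitian.inv.coe_re_star_dotProduct_mulVec_self u

/-- Woodbury-based step of Sec. IV-D of the paper: with `S₀ = S + Z_e Z_eᴴ`,
`Z_eᴴ S₀⁻¹ a = (I + Z_eᴴ S⁻¹ Z_e)⁻¹ (Z_eᴴ S⁻¹ a)`; consequently, for `a ≠ 0`, the Gradient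
statistic for a range-spread target equals `K` times the GLR quantity `η′`, i.e., the Gradient
test is statistically equivalent to the GLRT for range-spread targets. -/
theorem gradient_equals_glr_range_spread
    (N M : ℕ) (hN : 0 < N) (hM : 0 < M)
    (S : Matrix (Fin N) (Fin N) ℂ) (hS : S.PosDef)
    (Ze : Matrix (Fin N) (Fin M) ℂ) (a : Fin N → ℂ) :
    let S0 : Matrix (Fin N) (Fin N) ℂ := S + Ze * Zeᴴ
    let D0 : Matrix (Fin M) (Fin M) ℂ := 1 + Zeᴴ * S⁻¹ * Ze
    let u : Fin M → ℂ := Zeᴴ *ᵥ (S⁻¹ *ᵥ a)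
    S0.PosDef ∧ IsUnit D0 ∧
      Zeᴴ *ᵥ (S0⁻¹ *ᵥ a) = D0⁻¹ *ᵥ u ∧
      (a ≠ 0 → ∀ Kc : ℝ,
        (Kc : ℂ) * (((star u ⬝ᵥ (Zeᴴ *ᵥ (S0⁻¹ *ᵥ a))).re : ℂ)) / (star a ⬝ᵥ (S⁻¹ *ᵥ a)) =
          (Kc : ℂ) * (star u ⬝ᵥ (D0⁻¹ *ᵥ u)) / (star a ⬝ᵥ (S⁻¹ *ᵥ a))) :=
  gradient_equals_glr_range_spread_general N M S hS Ze a
end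

section
/- Let S ∈ ℂ^{N×N} be Hermitian positive definite, Z_e ∈ ℂ^{N×M}, and a ∈ ℂ^N with a ≠ 0. Set c = a† S⁻¹ a (a positive real), u = Z_e† S⁻¹ a ∈ ℂ^M, D₀ = I_M + Z_e† S⁻¹ Z_e, η′ = u† D₀⁻¹ u / c, and D₁ = D₀ − c⁻¹ u u†. Then D₀ is Hermitian positive definite, 0 ≤ η′ < 1, D₁ is Hermitian positive definite, and c⁻¹ · Tr[ u u† D₁⁻¹ ] = η′ / (1 − η′). Hence the Lawley–Hotelling statistic t_lh = Tr[ Z_e† S⁻¹ a a† S⁻¹ Z_e D₁⁻¹ ] / (a† S⁻¹ a) for range-spread targets equals η′/(1 − η′) and is therefore statistically equivalent to the GLR for range-spread targets. -/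
/-!
Write `W = S⁻¹` and `v = W a`, so that `c = aᴴ W a > 0` and `u = Z_eᴴ v`. The matrix
`P = W - c⁻¹ v vᴴ` is positive semidefinite: `xᴴ P x = yᴴ W y` for the `W`-orthogonal projection
`y` of `x` away from `a`. Since `D₁ = I + Z_eᴴ P Z_e`, `D₁` is positive definite. By the matrix
determinant lemma `det D₁ = det D₀ · (1 - η′)`, so `1 - η′ > 0`, and by Sherman–Morrison
`D₁⁻¹ u = (1 - η′)⁻¹ D₀⁻¹ u`, whence `c⁻¹ Tr[u uᴴ D₁⁻¹] = c⁻¹ uᴴ D₁⁻¹ u = η′ / (1 - η′)`.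
-/

open Matrix
open scoped ComplexOrder

namespace Matrix

variable {m n K : Type*}

theorem conjTranspose_mul_vecMulVec_star_mul [Fintype m] [CommSemiring K] [StarRing K]
    (B : Matrix m n K) (v : m → K) :
    Bᴴ * vecMulVec v (star v) * B = vecMulVec (Bᴴ *ᵥ v) (star (Bᴴ *ᵥ v)) := by
  rw [mul_vecMulVec, vecMulVec_mul, star_mulVec, conjTranspose_conjTranspose]

variable [Fintype n]

theorem trace_vecMulVec_mul [CommSemiring K] (u v : n → K) (B : Matrix n n K) :
    (vecMulVec u v * B).trace = v ⬝ᵥ (B *ᵥ u) := by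
  rw [vecMulVec_mul, trace_vecMulVec, dotProduct_comm, dotProduct_mulVec]

theorem PosDef.posSemidef_sub_inv_smul_vecMulVec {W : Matrix n n ℂ} (hW : W.PosDef)
    (a : n → ℂ) :
    (W - (star a ⬝ᵥ (W *ᵥ a))⁻¹ • vecMulVec (W *ᵥ a) (star (W *ᵥ a))).PosSemidef := by
  rcases eq_or_ne a 0 with rfl | ha
  · simpa using hW.posSemidef
  set c := star a ⬝ᵥ (W *ᵥ a) with hc_def
  set v := W *ᵥ a with hv_def
  have hc : 0 < c := hW.dotProduct_mulVec_pos ha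
  have hc_star : star c = c := IsSelfAdjoint.of_nonneg hc.le
  have hP : (W - c⁻¹ • vecMulVec v (star v)).IsHermitian :=
    hW.isHermitian.sub ((posSemidef_vecMulVec_self_star v).smul (inv_nonneg.2 hc.le)).isHermitian
  refine PosSemidef.of_dotProduct_mulVec_nonneg hP fun x => ?_
  set β := star v ⬝ᵥ x
  have hxv : star x ⬝ᵥ v = star β := star_dotProduct x v
  have hax : star a ⬝ᵥ (W *ᵥ x) = β := by
    rw [dotProduct_mulVec, ← hW.isHermitian.eq, ← star_mulVec]
  have key : star x ⬝ᵥ ((W - c⁻¹ • vecMulVec v (star v)) *ᵥ x) =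
      star (x - (β / c) • a) ⬝ᵥ (W *ᵥ (x - (β / c) • a)) := by
    simp only [sub_mulVec, smul_mulVec, vecMulVec_mulVec, op_smul_eq_smul, mulVec_sub,
      mulVec_smul, star_sub, star_smul, dotProduct_sub, sub_dotProduct, dotProduct_smul,
      smul_dotProduct, smul_eq_mul, hxv, hax, ← hv_def, ← hc_def, star_div₀, hc_star]
    field_simp
    ring
  rw [key]
  exact hW.posSemidef.dotProduct_mulVec_nonneg _

variable [DecidableEq n] [Field K] {D : Matrix n n K}

theorem det_sub_smul_vecMulVec (hD : IsUnit D.det) (r : K) (u v : n → K) :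
    (D - r • vecMulVec u v).det = D.det * (1 - r * (v ⬝ᵥ (D⁻¹ *ᵥ u))) := by
  rw [sub_eq_add_neg, ← vecMulVec_smul, ← vecMulVec_neg, vecMulVec_eq Unit,
    det_add_replicateCol_mul_replicateRow hD, det_unique (n := Unit), Matrix.mul_assoc,
    ← replicateCol_mulVec, add_apply, one_apply_eq, replicateRow_mul_replicateCol_apply,
    neg_dotProduct, smul_dotProduct, smul_eq_mul, ← sub_eq_add_neg]

theorem sub_smul_vecMulVec_mulVec_inv_mulVec (hD : IsUnit D.det) (r : K) (u v : n → K) :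
    (D - r • vecMulVec u v) *ᵥ (D⁻¹ *ᵥ u) = (1 - r * (v ⬝ᵥ (D⁻¹ *ᵥ u))) • u := by
  rw [sub_mulVec, mulVec_mulVec, mul_nonsing_inv _ hD, one_mulVec, smul_mulVec, vecMulVec_mulVec,
    op_smul_eq_smul, smul_smul, sub_smul, one_smul]

theorem inv_sub_smul_vecMulVec_mulVec (hD : IsUnit D.det) {r : K} {u v : n → K}
    (hs : 1 - r * (v ⬝ᵥ (D⁻¹ *ᵥ u)) ≠ 0) :
    (D - r • vecMulVec u v)⁻¹ *ᵥ u = (1 - r * (v ⬝ᵥ (D⁻¹ *ᵥ u)))⁻¹ • (D⁻¹ *ᵥ u) := by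
  have hdet : (D - r • vecMulVec u v).det ≠ 0 := by
    rw [det_sub_smul_vecMulVec hD]
    exact mul_ne_zero hD.ne_zero hs
  apply mulVec_injective_of_det_ne_zero hdet
  rw [mulVec_mulVec, mul_nonsing_inv _ hdet.isUnit, one_mulVec, mulVec_smul,
    sub_smul_vecMulVec_mulVec_inv_mulVec hD, inv_smul_smul₀ hs]

end Matrix

theorem lh_equals_glr_range_spread_general
    (N M : ℕ)
    (S : Matrix (Fin N) (Fin N) ℂ) (hS : S.PosDef)
    (Ze : Matrix (Fin N) (Fin M) ℂ) (a : Fin N → ℂ) (ha : a ≠ 0) :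
    let c : ℂ := star a ⬝ᵥ (S⁻¹ *ᵥ a)
    let u : Fin M → ℂ := Zeᴴ *ᵥ (S⁻¹ *ᵥ a)
    let D0 : Matrix (Fin M) (Fin M) ℂ := 1 + Zeᴴ * S⁻¹ * Ze
    let η : ℂ := (star u ⬝ᵥ (D0⁻¹ *ᵥ u)) / c
    let D1 : Matrix (Fin M) (Fin M) ℂ := D0 - c⁻¹ • vecMulVec u (star u)
    (0 < c.re ∧ c.im = 0) ∧
      D0.PosDef ∧
      (η.im = 0 ∧ 0 ≤ η.re ∧ η.re < 1) ∧
      D1.PosDef ∧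
      c⁻¹ * (vecMulVec u (star u) * D1⁻¹).trace = η / (1 - η) ∧
      (Zeᴴ * S⁻¹ * vecMulVec a (star a) * S⁻¹ * Ze * D1⁻¹).trace / c = η / (1 - η) := by
  intro c u D0 η D1
  have hc : 0 < c := hS.inv.dotProduct_mulVec_pos ha
  have hD0 : D0.PosDef :=
    PosDef.one.add_posSemidef (hS.inv.posSemidef.conjTranspose_mul_mul_same Ze)
  have hD1 : D1.PosDef := by
    have hP := (hS.inv.posSemidef_sub_inv_smul_vecMulVec a).conjTranspose_mul_mul_same Ze
    rw [Matrix.mul_sub, Matrix.sub_mul, Matrix.mul_smul, Matrix.smul_mul,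
      conjTranspose_mul_vecMulVec_star_mul] at hP
    simpa only [D1, D0, add_sub_assoc] using PosDef.one.add_posSemidef hP
  have hdet : D1.det = D0.det * (1 - η) := by
    rw [det_sub_smul_vecMulVec hD0.det_pos.ne'.isUnit, inv_mul_eq_div]
  have h1η : 0 < 1 - η := (pos_iff_pos_of_mul_pos (hdet ▸ hD1.det_pos)).mp hD0.det_pos
  have hη : 0 ≤ η := div_nonneg (hD0.inv.posSemidef.dotProduct_mulVec_nonneg u) hc.le
  have hD1u : D1⁻¹ *ᵥ u = (1 - η)⁻¹ • (D0⁻¹ *ᵥ u) := by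
    have hs : 1 - c⁻¹ * (star u ⬝ᵥ (D0⁻¹ *ᵥ u)) ≠ 0 := by rw [inv_mul_eq_div]; exact h1η.ne'
    rw [inv_sub_smul_vecMulVec_mulVec hD0.det_pos.ne'.isUnit hs, inv_mul_eq_div]
  have htrace : c⁻¹ * (vecMulVec u (star u) * D1⁻¹).trace = η / (1 - η) := by
    rw [trace_vecMulVec_mul, hD1u, dotProduct_smul, smul_eq_mul, div_eq_mul_inv η]
    simp only [η]
    ring
  have hA : Zeᴴ * S⁻¹ * vecMulVec a (star a) * S⁻¹ * Ze = vecMulVec u (star u) := by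
    calc _ = Zeᴴ * (S⁻¹ᴴ * vecMulVec a (star a) * S⁻¹) * Ze := by
          rw [hS.inv.isHermitian.eq]; simp only [Matrix.mul_assoc]
      _ = _ := by
          rw [conjTranspose_mul_vecMulVec_star_mul, hS.inv.isHermitian.eq,
            conjTranspose_mul_vecMulVec_star_mul]
  refine ⟨⟨(Complex.pos_iff.1 hc).1, (Complex.pos_iff.1 hc).2.symm⟩, hD0,
    ⟨(Complex.nonneg_iff.1 hη).2.symm, (Complex.nonneg_iff.1 hη).1, ?_⟩, hD1, htrace, ?_⟩
  · simpa using (Complex.lt_def.1 (sub_pos.1 h1η)).1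
  · rw [hA, div_eq_inv_mul, htrace]

/-- Final computation of Sec. IV-D (LH statistic) of the paper: `c = aᴴ S⁻¹ a` is a positive
real, `D₀ = I + Z_eᴴ S⁻¹ Z_e` is Hermitian positive definite, `0 ≤ η′ < 1`,
`D₁ = D₀ − c⁻¹ u uᴴ` is Hermitian positive definite, and
`c⁻¹ Tr[u uᴴ D₁⁻¹] = η′/(1 − η′)`; hence the Lawley–Hotelling statistic
`t_lh = Tr[Z_eᴴ S⁻¹ a aᴴ S⁻¹ Z_e D₁⁻¹]/(aᴴ S⁻¹ a)` equals `η′/(1 − η′)` and is statistically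
equivalent to the GLR for range-spread targets. -/
theorem lh_equals_glr_range_spread
    (N M : ℕ) (hN : 0 < N) (hM : 0 < M)
    (S : Matrix (Fin N) (Fin N) ℂ) (hS : S.PosDef)
    (Ze : Matrix (Fin N) (Fin M) ℂ) (a : Fin N → ℂ) (ha : a ≠ 0) :
    let c : ℂ := star a ⬝ᵥ (S⁻¹ *ᵥ a)
    let u : Fin M → ℂ := Zeᴴ *ᵥ (S⁻¹ *ᵥ a)
    let D0 : Matrix (Fin M) (Fin M) ℂ := 1 + Zeᴴ * S⁻¹ * Ze
    let η : ℂ := (star u ⬝ᵥ (D0⁻¹ *ᵥ u)) / c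
    let D1 : Matrix (Fin M) (Fin M) ℂ := D0 - c⁻¹ • vecMulVec u (star u)
    (0 < c.re ∧ c.im = 0) ∧
      D0.PosDef ∧
      (η.im = 0 ∧ 0 ≤ η.re ∧ η.re < 1) ∧
      D1.PosDef ∧
      c⁻¹ * (vecMulVec u (star u) * D1⁻¹).trace = η / (1 - η) ∧
      (Zeᴴ * S⁻¹ * vecMulVec a (star a) * S⁻¹ * Ze * D1⁻¹).trace / c = η / (1 - η) :=
  lh_equals_glr_range_spread_general N M S hS Ze a ha
end
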